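/- arXiv:math/9805070 — 10 statements merged into one kernel-verified Lean document; each statement's English description precedes it below -/
import Mathlib

section
/- For all integers n ≥ 1 and a with 1 ≤ a ≤ n, we have (−1)^a · I(n,a) > 0; in particular I(n,a) ≠ 0 and its sign is (−1)^a. -/
open Real

/-- `I n a = ∫₀^a ∏_{k ∈ {0,…,n}, k ≠ a} (k² − x²) dx`. -/
noncomputable def I (n a : ℕ) : ℝ :=
  ∫ x in (0:ℝ)..(a:ℝ), ∏ k ∈ (Finset.range (n+1)).erase a, ((k:ℝ)^2 - x^2)

/-- `C n = (4π)^{-(n+1/2)} / Γ(n+1/2)`. -/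
noncomputable def C (n : ℕ) : ℝ :=
  (4*π) ^ (-((n:ℝ) + 1/2)) / Real.Gamma ((n:ℝ) + 1/2)

/-- `α n = 4π C n Σ_{j=0}^{n-1} (2n choose j) |I(n, n-j)|`. -/
noncomputable def α (n : ℕ) : ℝ :=
  4*π * C n * ∑ j ∈ Finset.range n, ((2*n).choose j : ℝ) * |I n (n - j)|

/-- `f n a r t = (t+r)/((a+t+r)(a−t−r)) · ∏_{k=−n+r}^{n+r} (t+k)`. -/
noncomputable def f (n a r : ℕ) (t : ℝ) : ℝ :=
  ((t + r) / (((a:ℝ) + t + r) * ((a:ℝ) - t - r))) *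
    ∏ k ∈ Finset.range (2*n+1), (t + ((k:ℝ) - n + r))

namespace SignOfIAux

/-- The integrand. -/
noncomputable def g (n a : ℕ) (x : ℝ) : ℝ :=
  ∏ k ∈ (Finset.range (n+1)).erase a, ((k:ℝ)^2 - x^2)

@[fun_prop]
lemma g_cont (n a : ℕ) : Continuous (g n a) := by
  unfold g
  exact continuous_finset_prod _ (fun k _ => by fun_prop)

lemma g_intble (n a : ℕ) (u v : ℝ) :
    IntervalIntegrable (g n a) MeasureTheory.volume u v :=
  (g_cont n a).intervalIntegrable u v

/-- Sign of `g` on `(j, j+1)` for `j + 1 ≤ a`. -/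
lemma g_sign (n a j : ℕ) (hja : j + 1 ≤ a) (han : a ≤ n) {x : ℝ}
    (hx1 : (j:ℝ) < x) (hx2 : x < (j:ℝ) + 1) :
    0 < (-1:ℝ)^(j+1) * g n a x := by
  have hx0 : 0 < x := lt_of_le_of_lt (Nat.cast_nonneg j) hx1
  have hsub : Finset.range (j+1) ⊆ (Finset.range (n+1)).erase a := by
    intro k hk
    simp only [Finset.mem_range, Finset.mem_erase] at *
    omega
  have hsplit := Finset.prod_sdiff (f := fun k : ℕ => ((k:ℝ)^2 - x^2)) hsub
  have hneg : ∏ k ∈ Finset.range (j+1), ((k:ℝ)^2 - x^2)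
      = (-1:ℝ)^(j+1) * ∏ k ∈ Finset.range (j+1), (x^2 - (k:ℝ)^2) := by
    rw [show ((-1:ℝ)^(j+1)) = ∏ _k ∈ Finset.range (j+1), (-1:ℝ) by
        rw [Finset.prod_const, Finset.card_range], ← Finset.prod_mul_distrib]
    apply Finset.prod_congr rfl
    intro k _; ring
  have hpos1 : 0 < ∏ k ∈ Finset.range (j+1), (x^2 - (k:ℝ)^2) := by
    apply Finset.prod_pos
    intro k hk
    have hk' : (k:ℝ) < x := by
      have : (k:ℝ) ≤ (j:ℝ) := by exact_mod_cast Nat.lt_succ_iff.mp (Finset.mem_range.mp hk)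
      linarith
    have hk0 : (0:ℝ) ≤ k := Nat.cast_nonneg k
    nlinarith
  have hpos2 : 0 < ∏ k ∈ (Finset.range (n+1)).erase a \ Finset.range (j+1),
      ((k:ℝ)^2 - x^2) := by
    apply Finset.prod_pos
    intro k hk
    rw [Finset.mem_sdiff, Finset.mem_range] at hk
    have hk' : (j:ℝ) + 1 ≤ (k:ℝ) := by
      have : j + 1 ≤ k := by
        rcases hk with ⟨_, h2⟩; omega
      exact_mod_cast this
    nlinarith
  have hsq : ((-1:ℝ)^(j+1)) * ((-1:ℝ)^(j+1)) = 1 := by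
    rw [← pow_add]
    exact Even.neg_one_pow ⟨j+1, by ring⟩
  have : g n a x = (∏ k ∈ (Finset.range (n+1)).erase a \ Finset.range (j+1),
      ((k:ℝ)^2 - x^2)) * ((-1:ℝ)^(j+1) * ∏ k ∈ Finset.range (j+1), (x^2 - (k:ℝ)^2)) := by
    rw [← hneg, hsplit]; rfl
  rw [this]
  have hrw : (-1:ℝ)^(j+1) * ((∏ k ∈ (Finset.range (n+1)).erase a \ Finset.range (j+1),
      ((k:ℝ)^2 - x^2)) * ((-1:ℝ)^(j+1) * ∏ k ∈ Finset.range (j+1), (x^2 - (k:ℝ)^2)))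
      = (((-1:ℝ)^(j+1)) * ((-1:ℝ)^(j+1))) * ((∏ k ∈ (Finset.range (n+1)).erase a \ Finset.range (j+1),
      ((k:ℝ)^2 - x^2)) * ∏ k ∈ Finset.range (j+1), (x^2 - (k:ℝ)^2)) := by ring
  rw [hrw, hsq, one_mul]
  exact mul_pos hpos2 hpos1

/-- product-with-abs identity -/
lemma g_abs_eq (n a : ℕ) (ha : a ≤ n) {y : ℝ} (hy : 0 < y) :
    |g n a y| * (((a:ℝ) + y) * |(a:ℝ) - y|)
      = (∏ k ∈ Finset.range (n+1), ((k:ℝ) + y)) *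
        (∏ k ∈ Finset.range (n+1), |(k:ℝ) - y|) := by
  have hmem : a ∈ Finset.range (n+1) := Finset.mem_range.mpr (by omega)
  have h1 : |g n a y| = (∏ k ∈ (Finset.range (n+1)).erase a, ((k:ℝ) + y)) *
      (∏ k ∈ (Finset.range (n+1)).erase a, |(k:ℝ) - y|) := by
    unfold g
    rw [Finset.abs_prod, ← Finset.prod_mul_distrib]
    apply Finset.prod_congr rfl
    intro k _
    have : ((k:ℝ)^2 - y^2) = ((k:ℝ) + y) * ((k:ℝ) - y) := by ring
    rw [this, abs_mul, abs_of_pos (by positivity : (0:ℝ) < (k:ℝ) + y)]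
  rw [h1, ← Finset.mul_prod_erase _ (fun k : ℕ => ((k:ℝ) + y)) hmem,
    ← Finset.mul_prod_erase _ (fun k : ℕ => |(k:ℝ) - y|) hmem]
  ring

/-- `|g|` grows when shifting by 1, on `(j, j+1)` with `j+2 ≤ a`. -/
lemma g_abs_lt (n a j : ℕ) (hja : j + 2 ≤ a) (han : a ≤ n) {x : ℝ}
    (hx1 : (j:ℝ) < x) (hx2 : x < (j:ℝ) + 1) :
    |g n a x| < |g n a (x+1)| := by
  have hx0 : 0 < x := lt_of_le_of_lt (Nat.cast_nonneg j) hx1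
  have hxa : x + 1 < (a:ℝ) := by
    have : ((j:ℝ) + 2) ≤ (a:ℝ) := by exact_mod_cast hja
    linarith
  have hxn : x + 1 < (n:ℝ) := by
    have : (a:ℝ) ≤ n := by exact_mod_cast han
    linarith
  -- shift identities
  have hP : x * (∏ k ∈ Finset.range (n+1), ((k:ℝ) + (x+1)))
      = ((n:ℝ) + 1 + x) * ∏ k ∈ Finset.range (n+1), ((k:ℝ) + x) := by
    have h1 : ∏ k ∈ Finset.range (n+2), ((k:ℝ) + x)
        = (∏ k ∈ Finset.range (n+1), ((k:ℝ) + (x+1))) * (((0:ℕ):ℝ) + x) := by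
      rw [Finset.prod_range_succ' (fun k : ℕ => ((k:ℝ) + x)) (n+1)]
      congr 1
      apply Finset.prod_congr rfl
      intro k _; push_cast; ring
    have h2 : ∏ k ∈ Finset.range (n+2), ((k:ℝ) + x)
        = (∏ k ∈ Finset.range (n+1), ((k:ℝ) + x)) * (((n+1:ℕ):ℝ) + x) := by
      rw [Finset.prod_range_succ]
    have h3 := h1.symm.trans h2
    push_cast at h3
    linear_combination h3
  have hQ : ((n:ℝ) - x) * (∏ k ∈ Finset.range (n+1), |(k:ℝ) - (x+1)|)
      = (1 + x) * ∏ k ∈ Finset.range (n+1), |(k:ℝ) - x| := by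
    have h1 : ∏ k ∈ Finset.range (n+1), |(k:ℝ) - (x+1)|
        = (∏ k ∈ Finset.range n, |(k:ℝ) - x|) * (1 + x) := by
      rw [Finset.prod_range_succ' (fun k : ℕ => |(k:ℝ) - (x+1)|) n]
      congr 1
      · apply Finset.prod_congr rfl
        intro k _
        congr 1
        push_cast; ring
      · rw [show ((0:ℕ):ℝ) - (x+1) = -(1+x) by push_cast; ring, abs_neg,
          abs_of_pos (by linarith)]
    have h2 : ∏ k ∈ Finset.range (n+1), |(k:ℝ) - x|
        = (∏ k ∈ Finset.range n, |(k:ℝ) - x|) * ((n:ℝ) - x) := by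
      rw [Finset.prod_range_succ]
      congr 1
      rw [abs_of_pos (by linarith)]
    rw [h1, h2]; ring
  -- abs equations
  have e0 := g_abs_eq n a han hx0
  have e1 := g_abs_eq n a han (by linarith : (0:ℝ) < x + 1)
  rw [show |(a:ℝ) - x| = (a:ℝ) - x from abs_of_pos (by linarith)] at e0
  rw [show |(a:ℝ) - (x+1)| = (a:ℝ) - (x+1) from abs_of_pos (by linarith)] at e1
  -- g x ≠ 0
  have hg0 : 0 < |g n a x| := by
    have := g_sign n a j (by omega) han hx1 hx2
    have hne : g n a x ≠ 0 := by
      intro h; rw [h, mul_zero] at this; exact lt_irrefl 0 this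
    exact abs_pos.mpr hne
  -- key equation
  have m1 : (x * (∏ k ∈ Finset.range (n+1), ((k:ℝ) + (x+1)))) *
        (((n:ℝ) - x) * (∏ k ∈ Finset.range (n+1), |(k:ℝ) - (x+1)|))
      = (((n:ℝ) + 1 + x) * ∏ k ∈ Finset.range (n+1), ((k:ℝ) + x)) *
        ((1 + x) * ∏ k ∈ Finset.range (n+1), |(k:ℝ) - x|) := by
    rw [hP, hQ]
  have key : ((x * ((n:ℝ) - x)) * (((a:ℝ) + (x+1)) * ((a:ℝ) - (x+1)))) * |g n a (x+1)|
      = ((((n:ℝ) + 1 + x) * (1 + x)) * (((a:ℝ) + x) * ((a:ℝ) - x))) * |g n a x| := by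
    linear_combination (x * ((n:ℝ) - x)) * e1 - (((n:ℝ) + 1 + x) * (1 + x)) * e0 + m1
  have hc1 : 0 < (x * ((n:ℝ) - x)) * (((a:ℝ) + (x+1)) * ((a:ℝ) - (x+1))) := by
    have h1 : 0 < (n:ℝ) - x := by linarith
    have h2 : 0 < (a:ℝ) - (x+1) := by linarith
    have h3 : 0 < (a:ℝ) + (x+1) := by positivity
    positivity
  have f1 : x * ((n:ℝ) - x) < ((n:ℝ) + 1 + x) * (1 + x) := by nlinarith [sq_nonneg x]
  have f2 : ((a:ℝ) + (x+1)) * ((a:ℝ) - (x+1)) < ((a:ℝ) + x) * ((a:ℝ) - x) := by nlinarith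
  have hc2 : (x * ((n:ℝ) - x)) * (((a:ℝ) + (x+1)) * ((a:ℝ) - (x+1)))
      < (((n:ℝ) + 1 + x) * (1 + x)) * (((a:ℝ) + x) * ((a:ℝ) - x)) := by
    apply mul_lt_mul'' f1 f2
    · nlinarith
    · nlinarith
  have h5 : ((x * ((n:ℝ) - x)) * (((a:ℝ) + (x+1)) * ((a:ℝ) - (x+1)))) * |g n a x|
      < ((x * ((n:ℝ) - x)) * (((a:ℝ) + (x+1)) * ((a:ℝ) - (x+1)))) * |g n a (x+1)| := by
    calc ((x * ((n:ℝ) - x)) * (((a:ℝ) + (x+1)) * ((a:ℝ) - (x+1)))) * |g n a x|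
        < ((((n:ℝ) + 1 + x) * (1 + x)) * (((a:ℝ) + x) * ((a:ℝ) - x))) * |g n a x| :=
          mul_lt_mul_of_pos_right hc2 hg0
      _ = _ := key.symm
  exact lt_of_mul_lt_mul_left h5 hc1.le

/-- pointwise key inequality for monotonicity. -/
lemma g_key (n a j : ℕ) (hja : j + 2 ≤ a) (han : a ≤ n) {x : ℝ}
    (hx1 : (j:ℝ) < x) (hx2 : x < (j:ℝ) + 1) :
    0 < (-1:ℝ)^j * (g n a (x+1) + g n a x) := by
  have s0 := g_sign n a j (by omega) han hx1 hx2
  have s1 := g_sign n a (j+1) (by omega) han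
    (by push_cast; linarith : ((j+1:ℕ):ℝ) < x + 1)
    (by push_cast; linarith : x + 1 < ((j+1:ℕ):ℝ) + 1)
  have habs := g_abs_lt n a j hja han hx1 hx2
  have hpow : (-1:ℝ)^(j+1+1) = (-1:ℝ)^j := by
    rw [pow_succ, pow_succ]; ring
  rw [hpow] at s1
  rcases Nat.even_or_odd j with he | ho
  · have h1 : (-1:ℝ)^j = 1 := Even.neg_one_pow he
    have h2 : (-1:ℝ)^(j+1) = -1 := Odd.neg_one_pow (by exact Even.add_one he)
    rw [h1] at s1 ⊢
    rw [h2] at s0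
    have hg0 : g n a x < 0 := by linarith
    have hg1 : 0 < g n a (x+1) := by linarith
    rw [abs_of_neg hg0, abs_of_pos hg1] at habs
    linarith
  · have h1 : (-1:ℝ)^j = -1 := Odd.neg_one_pow ho
    have h2 : (-1:ℝ)^(j+1) = 1 := Even.neg_one_pow (Odd.add_one ho)
    rw [h1] at s1 ⊢
    rw [h2] at s0
    have hg0 : 0 < g n a x := by linarith
    have hg1 : g n a (x+1) < 0 := by linarith
    rw [abs_of_pos hg0, abs_of_neg hg1] at habs
    linarith

end SignOfIAux

theorem sign_of_I (n a : ℕ) (hn : 1 ≤ n) (ha1 : 1 ≤ a) (han : a ≤ n) :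
    (-1 : ℝ)^a * I n a > 0 := by
  classical
  open SignOfIAux in
  -- d j = (-1)^(j+1) ∫_j^{j+1} g
  set d : ℕ → ℝ := fun j => (-1:ℝ)^(j+1) * ∫ x in (j:ℝ)..((j:ℝ)+1), g n a x with hd_def
  have hsq : ∀ m : ℕ, ((-1:ℝ)^m) * ((-1:ℝ)^m) = 1 := fun m => by
    rw [← pow_add]; exact Even.neg_one_pow ⟨m, by ring⟩
  have hd_pos : ∀ j : ℕ, j < a → 0 < d j := by
    intro j hj
    have : d j = ∫ x in (j:ℝ)..((j:ℝ)+1), ((-1:ℝ)^(j+1) * g n a x) := by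
      rw [hd_def]; simp [intervalIntegral.integral_const_mul]
    rw [this]
    apply intervalIntegral.intervalIntegral_pos_of_pos_on
    · exact ((continuous_const.mul (g_cont n a)).intervalIntegrable _ _)
    · intro x hx
      exact g_sign n a j (by omega) han hx.1 hx.2
    · linarith
  have hd_lt : ∀ j : ℕ, j + 2 ≤ a → d j < d (j+1) := by
    intro j hj
    have hshift : (∫ x in (j:ℝ)..((j:ℝ)+1), g n a (x+1))
        = ∫ x in ((j:ℝ)+1)..(((j:ℝ)+1)+1), g n a x := by
      rw [intervalIntegral.integral_comp_add_right (g n a) 1]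
    have hint1 : IntervalIntegrable (fun x : ℝ => g n a (x+1))
        MeasureTheory.volume (j:ℝ) ((j:ℝ)+1) := by
      apply Continuous.intervalIntegrable; fun_prop
    have hpos : 0 < ∫ x in (j:ℝ)..((j:ℝ)+1),
        ((-1:ℝ)^j * (g n a (x+1) + g n a x)) := by
      apply intervalIntegral.intervalIntegral_pos_of_pos_on
      · apply Continuous.intervalIntegrable; fun_prop
      · intro x hx
        exact g_key n a j hj han hx.1 hx.2
      · linarith
    have heq : (∫ x in (j:ℝ)..((j:ℝ)+1), ((-1:ℝ)^j * (g n a (x+1) + g n a x)))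
        = d (j+1) - d j := by
      rw [intervalIntegral.integral_const_mul,
        intervalIntegral.integral_add hint1 (g_intble n a _ _), hshift]
      simp only [hd_def]
      push_cast
      rw [show (-1:ℝ)^(j+1+1) = (-1:ℝ)^j by rw [pow_succ, pow_succ]; ring,
        show (-1:ℝ)^(j+1) = -(-1:ℝ)^j by rw [pow_succ]; ring]
      ring
    linarith [heq ▸ hpos]
  -- partial sums
  set T : ℕ → ℝ := fun m => ∑ j ∈ Finset.range m, (-1:ℝ)^(j+1) * d j with hT_def
  have main : ∀ m : ℕ, 1 ≤ m → m ≤ a → 0 < (-1:ℝ)^m * T m ∧ (-1:ℝ)^m * T m ≤ d (m-1) := by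
    intro m
    induction m with
    | zero => intro h; omega
    | succ m ih =>
      intro _ hma
      rcases Nat.eq_or_lt_of_le (Nat.one_le_iff_ne_zero.mpr (Nat.succ_ne_zero m)) with h1 | h1
      · -- m = 0
        have hm0 : m = 0 := by omega
        subst hm0
        have hT1 : (-1:ℝ)^(0+1) * T (0+1) = d 0 := by
          simp only [hT_def, Finset.sum_range_one]
          norm_num
        rw [hT1]
        exact ⟨hd_pos 0 (by omega), le_refl _⟩
      · have hm1 : 1 ≤ m := by omega
        have hma' : m ≤ a := by omega
        obtain ⟨ihp, ihb⟩ := ih hm1 hma'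
        have hTsucc : T (m+1) = T m + (-1:ℝ)^(m+1) * d m := by
          rw [hT_def]; exact Finset.sum_range_succ _ m
        have hstep : (-1:ℝ)^(m+1) * T (m+1) = d m - (-1:ℝ)^m * T m := by
          rw [hTsucc]
          have hp : (-1:ℝ)^(m+1) = -(-1:ℝ)^m := by rw [pow_succ]; ring
          rw [hp]
          linear_combination (d m) * hsq m
        have hdd : d (m-1) < d m := by
          have : (m-1) + 2 ≤ a := by omega
          have h := hd_lt (m-1) this
          rwa [show m - 1 + 1 = m by omega] at h
        constructor
        · rw [hstep]; linarith
        · rw [hstep, show m + 1 - 1 = m by omega]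
          linarith
  -- I n a = T a
  have hIT : I n a = T a := by
    have hadj : ∑ k ∈ Finset.range a, (∫ x in ((k:ℕ):ℝ)..(((k+1:ℕ)):ℝ), g n a x)
        = ∫ x in ((0:ℕ):ℝ)..((a:ℕ):ℝ), g n a x := by
      apply intervalIntegral.sum_integral_adjacent_intervals
      intro k _
      exact g_intble n a _ _
    have : I n a = ∫ x in (0:ℝ)..(a:ℝ), g n a x := rfl
    rw [this, ← (by norm_num : ((0:ℕ):ℝ) = (0:ℝ)), ← hadj, hT_def]
    apply Finset.sum_congr rfl
    intro j _
    have h1 : (-1:ℝ)^(j+1) * d j = ∫ x in (j:ℝ)..((j:ℝ)+1), g n a x := by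
      show (-1:ℝ)^(j+1) * ((-1:ℝ)^(j+1) * ∫ x in (j:ℝ)..((j:ℝ)+1), g n a x)
        = ∫ x in (j:ℝ)..((j:ℝ)+1), g n a x
      linear_combination (∫ x in (j:ℝ)..((j:ℝ)+1), g n a x) * hsq (j+1)
    rw [show (((j+1:ℕ)):ℝ) = (j:ℝ)+1 by push_cast; ring, ← h1]
  rw [hIT]
  exact (main a ha1 (le_refl a)).1
end

section
/- For every integer n ≥ 1, the quantity 2 · Σ_{j=0}^{n−1} (−1)^{j+1} · (−2π · C_n · (2n choose j) · I(n, n−j)) equals (−1)^n · α(n), and α(n) > 0. (This expresses that the L²-torsion of a closed hyperbolic (2n+1)-manifold equals (−1)^n α(n) Vol(M) with α(n) > 0.) -/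
open Real

open Finset

/-- The full product `P n x = ∏_{k=0}^{n} (k² − x²)`. -/
noncomputable def P (n : ℕ) (x : ℝ) : ℝ := ∏ k ∈ range (n+1), ((k:ℝ)^2 - x^2)

/-- The integrand of `I n a` (with the factor `a² − x²` removed). -/
noncomputable def g (n a : ℕ) (x : ℝ) : ℝ :=
  ∏ k ∈ (Finset.range (n+1)).erase a, ((k:ℝ)^2 - x^2)

lemma g_cont (n a : ℕ) : Continuous (g n a) := by
  unfold g
  exact continuous_finset_prod _ fun k _ => by continuity

/-- The key shift identity for the full product. -/
lemma P_shift (n : ℕ) (x : ℝ) :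
    P n (x-1) * (x * (x + n)) = P n x * ((x-1) * (x - n - 1)) := by
  induction n with
  | zero => simp [P]; ring
  | succ m ih =>
      have h1 : P (m+1) x = P m x * (((m:ℝ)+1)^2 - x^2) := by
        simp [P, prod_range_succ]
      have h2 : P (m+1) (x-1) = P m (x-1) * (((m:ℝ)+1)^2 - (x-1)^2) := by
        simp [P, prod_range_succ]
      rw [h1, h2]; push_cast
      linear_combination (((m:ℝ)+2-x) * (x+m+1)) * ih

lemma P_eq (n a : ℕ) (han : a ≤ n) (y : ℝ) :
    ((a:ℝ)^2 - y^2) * g n a y = P n y := by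
  unfold g P
  exact Finset.mul_prod_erase (range (n+1)) (fun k => (k:ℝ)^2 - y^2)
    (Finset.mem_range.mpr (Nat.lt_succ_of_le han))

/-- On the interval `(c-1, c)` with `1 ≤ c ≤ a ≤ n`, the integrand has sign `(-1)^c`. -/
lemma g_sign (n a c : ℕ) (hc1 : 1 ≤ c) (hca : c ≤ a) (han : a ≤ n) (x : ℝ)
    (hx1 : (c:ℝ) - 1 < x) (hx2 : x < c) : 0 < (-1:ℝ)^c * g n a x := by
  have hsub : range c ⊆ (range (n+1)).erase a := by
    intro k hk
    simp only [mem_range] at hk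
    simp only [mem_erase, mem_range]
    omega
  have hx0 : (0:ℝ) < x := by
    have : (1:ℝ) ≤ (c:ℝ) := by exact_mod_cast hc1
    linarith
  have hsplit : g n a x =
      (∏ k ∈ (range (n+1)).erase a \ range c, ((k:ℝ)^2 - x^2)) *
      (∏ k ∈ range c, ((k:ℝ)^2 - x^2)) := (prod_sdiff hsub).symm
  have h1 : ∏ k ∈ range c, ((k:ℝ)^2 - x^2)
      = (-1:ℝ)^c * ∏ k ∈ range c, (x^2 - (k:ℝ)^2) := by
    have : ∀ k ∈ range c, ((k:ℝ)^2 - x^2) = (-1) * (x^2 - (k:ℝ)^2) := fun k _ => by ring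
    rw [prod_congr rfl this, prod_mul_distrib, prod_const, card_range]
  have h1pos : 0 < ∏ k ∈ range c, (x^2 - (k:ℝ)^2) := by
    apply prod_pos
    intro k hk
    simp only [mem_range] at hk
    have hk' : (k:ℝ) ≤ (c:ℝ) - 1 := by
      have : (k:ℝ) + 1 ≤ (c:ℝ) := by exact_mod_cast hk
      linarith
    have hkx : (k:ℝ) < x := lt_of_le_of_lt hk' hx1
    have : (k:ℝ)^2 < x^2 := by nlinarith [Nat.cast_nonneg (α := ℝ) k]
    linarith
  have h2pos : 0 < ∏ k ∈ (range (n+1)).erase a \ range c, ((k:ℝ)^2 - x^2) := by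
    apply prod_pos
    intro k hk
    simp only [mem_sdiff, mem_erase, mem_range, not_lt] at hk
    have hck : (c:ℝ) ≤ (k:ℝ) := by exact_mod_cast hk.2
    have hxk : x < (k:ℝ) := lt_of_lt_of_le hx2 hck
    nlinarith
  rw [hsplit, h1]
  have hsq : (-1:ℝ)^c * ((-1:ℝ)^c) = 1 := by
    rw [← pow_add, ← two_mul, pow_mul]; norm_num
  calc (0:ℝ) < (∏ k ∈ (range (n+1)).erase a \ range c, ((k:ℝ)^2 - x^2)) *
      (∏ k ∈ range c, (x^2 - (k:ℝ)^2)) := mul_pos h2pos h1pos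
    _ = (-1:ℝ)^c * ((∏ k ∈ (range (n+1)).erase a \ range c, ((k:ℝ)^2 - x^2)) *
      ((-1:ℝ)^c * ∏ k ∈ range c, (x^2 - (k:ℝ)^2))) := by
        rw [← mul_assoc, ← mul_assoc]
        rw [mul_comm ((-1:ℝ)^c) _, mul_assoc _ ((-1:ℝ)^c) ((-1:ℝ)^c), hsq, mul_one]

/-- On `(c-1, c)` with `2 ≤ c ≤ a ≤ n`, `|g x| > |g (x-1)|`, expressed sign-wise. -/
lemma g_add_pos (n a c : ℕ) (hc : 2 ≤ c) (hca : c ≤ a) (han : a ≤ n) (x : ℝ)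
    (hx1 : (c:ℝ) - 1 < x) (hx2 : x < c) :
    0 < (-1:ℝ)^c * (g n a x + g n a (x-1)) := by
  have hc1 : ((c:ℝ)) ≤ a := by exact_mod_cast hca
  have han' : ((a:ℝ)) ≤ n := by exact_mod_cast han
  have hc2 : (2:ℝ) ≤ (c:ℝ) := by exact_mod_cast hc
  have hxa : x < a := lt_of_lt_of_le hx2 hc1
  have hx1' : 1 < x := by linarith
  have hu : 0 < (-1:ℝ)^c * g n a x :=
    g_sign n a c (by omega) hca han x hx1 hx2
  have hv0 : 0 < (-1:ℝ)^(c-1) * g n a (x-1) := by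
    apply g_sign n a (c-1) (by omega) (by omega) han
    · push_cast [Nat.cast_sub (by omega : 1 ≤ c)]; linarith
    · push_cast [Nat.cast_sub (by omega : 1 ≤ c)]; linarith
  have hneg : (-1:ℝ)^c = (-1:ℝ)^(c-1) * (-1) := by
    conv_lhs => rw [show c = (c-1)+1 by omega]
    rw [pow_succ]
  have hv : 0 < -((-1:ℝ)^c * g n a (x-1)) := by rw [hneg]; nlinarith [hv0]
  have hid : ((a:ℝ)^2 - (x-1)^2) * g n a (x-1) * (x * (x+n))
      = ((a:ℝ)^2 - x^2) * g n a x * ((x-1) * (x - n - 1)) := by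
    rw [P_eq n a han, P_eq n a han]; exact P_shift n x
  have hA1 : (0:ℝ) < (a:ℝ)^2 - (x-1)^2 := by nlinarith
  have hA2 : (0:ℝ) < (a:ℝ)^2 - x^2 := by nlinarith
  have hD : (0:ℝ) < ((a:ℝ)^2 - (x-1)^2) * (x * (x+n)) := by
    apply mul_pos hA1; apply mul_pos <;> linarith
  have hDE : ((a:ℝ)^2 - x^2) * ((x-1) * (n + 1 - x)) <
      ((a:ℝ)^2 - (x-1)^2) * (x * (x+n)) := by
    have h1 : (a:ℝ)^2 - x^2 < (a:ℝ)^2 - (x-1)^2 := by nlinarith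
    have h2 : (x-1) * ((n:ℝ) + 1 - x) < x * (x + (n:ℝ)) := by nlinarith
    have h3 : (0:ℝ) ≤ (x-1) * ((n:ℝ) + 1 - x) := by
      apply mul_nonneg <;> linarith
    exact mul_lt_mul'' h1 h2 (le_of_lt hA2) h3
  have key : (-((-1:ℝ)^c * g n a (x-1))) * (((a:ℝ)^2 - (x-1)^2) * (x * (x+n)))
      = ((-1:ℝ)^c * g n a x) * (((a:ℝ)^2 - x^2) * ((x-1) * (n + 1 - x))) := by
    linear_combination (-(-1:ℝ)^c) * hid
  have huv : -((-1:ℝ)^c * g n a (x-1)) < (-1:ℝ)^c * g n a x := by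
    have h1 : (-((-1:ℝ)^c * g n a (x-1))) * (((a:ℝ)^2 - (x-1)^2) * (x * (x+n)))
        < ((-1:ℝ)^c * g n a x) * (((a:ℝ)^2 - (x-1)^2) * (x * (x+n))) := by
      rw [key]
      exact mul_lt_mul_of_pos_left hDE hu
    exact lt_of_mul_lt_mul_right h1 (le_of_lt hD)
  nlinarith [huv]

/-- `L n a c = (-1)^c ∫_{c-1}^{c} g`. -/
noncomputable def L (n a c : ℕ) : ℝ := (-1:ℝ)^c * ∫ x in ((c:ℝ)-1)..(c:ℝ), g n a x

lemma L_pos (n a c : ℕ) (h1 : 1 ≤ c) (hca : c ≤ a) (han : a ≤ n) : 0 < L n a c := by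
  have h : 0 < ∫ x in ((c:ℝ)-1)..(c:ℝ), (-1:ℝ)^c * g n a x := by
    apply intervalIntegral.intervalIntegral_pos_of_pos_on
    · exact Continuous.intervalIntegrable (by have := g_cont n a; continuity) _ _
    · intro x hx
      exact g_sign n a c h1 hca han x hx.1 hx.2
    · linarith
  rwa [intervalIntegral.integral_const_mul] at h

lemma L_mono (n a c : ℕ) (h2 : 2 ≤ c) (hca : c ≤ a) (han : a ≤ n) :
    L n a (c-1) < L n a c := by
  have hshift : ∫ x in ((c:ℝ)-1)..(c:ℝ), g n a (x-1)
      = ∫ x in ((c:ℝ)-1-1)..((c:ℝ)-1), g n a x := by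
    exact intervalIntegral.integral_comp_sub_right (fun x => g n a x) 1
  have hcast : ((c-1:ℕ):ℝ) = (c:ℝ)-1 := by
    push_cast [Nat.cast_sub (by omega : 1 ≤ c)]; ring
  have hdiff : 0 < ∫ x in ((c:ℝ)-1)..(c:ℝ), (-1:ℝ)^c * (g n a x + g n a (x-1)) := by
    apply intervalIntegral.intervalIntegral_pos_of_pos_on
    · exact Continuous.intervalIntegrable (by have := g_cont n a; continuity) _ _
    · intro x hx
      exact g_add_pos n a c h2 hca han x hx.1 hx.2
    · linarith
  rw [intervalIntegral.integral_const_mul, intervalIntegral.integral_add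
    ((g_cont n a).intervalIntegrable _ _)
    (Continuous.intervalIntegrable (by have := g_cont n a; continuity) _ _), hshift] at hdiff
  have hneg : (-1:ℝ)^(c-1) = -(-1:ℝ)^c := by
    have : (-1:ℝ)^c = (-1:ℝ)^(c-1) * (-1) := by
      conv_lhs => rw [show c = (c-1)+1 by omega]
      rw [pow_succ]
    rw [this]; ring
  unfold L
  rw [hcast, hneg]
  nlinarith [hdiff]

/-- An alternating sum of increasing positive terms is positive (and at most the top term). -/
lemma alt_sum_pos (L : ℕ → ℝ) :
    ∀ a : ℕ, 1 ≤ a → (∀ c, 1 ≤ c → c ≤ a → 0 < L c) →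
      (∀ c, 2 ≤ c → c ≤ a → L (c-1) < L c) →
      0 < (∑ i ∈ range a, (-1:ℝ)^(a+i+1) * L (i+1)) ∧
      (∑ i ∈ range a, (-1:ℝ)^(a+i+1) * L (i+1)) ≤ L a := by
  intro a
  induction a with
  | zero => omega
  | succ m ih =>
      intro _ hpos hmono
      have hstep : (∑ i ∈ range (m+1), (-1:ℝ)^(m+1+i+1) * L (i+1))
          = L (m+1) - ∑ i ∈ range m, (-1:ℝ)^(m+i+1) * L (i+1) := by
        rw [sum_range_succ]
        have h2 : (-1:ℝ)^(m+1+m+1) = 1 := by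
          rw [show m+1+m+1 = 2*(m+1) by omega, pow_mul]; norm_num
        rw [h2, one_mul]
        have h3 : ∀ i ∈ range m, (-1:ℝ)^(m+1+i+1) * L (i+1)
            = -((-1:ℝ)^(m+i+1) * L (i+1)) := by
          intro i _
          rw [show m+1+i+1 = (m+i+1)+1 by omega, pow_succ]
          ring
        rw [sum_congr rfl h3, Finset.sum_neg_distrib]
        ring
      rcases Nat.eq_zero_or_pos m with hm | hm1
      · subst hm
        rw [hstep]
        simp only [range_zero, sum_empty]
        have := hpos 1 le_rfl le_rfl
        constructor <;> linarith
      · obtain ⟨hS1, hS2⟩ := ih hm1 (fun c h1 h2 => hpos c h1 (by omega))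
          (fun c h1 h2 => hmono c h1 (by omega))
        have hLm : L m < L (m+1) := by
          have := hmono (m+1) (by omega) le_rfl
          simpa using this
        rw [hstep]
        constructor <;> linarith

/-- The crucial sign statement: `(-1)^a I(n,a) > 0` for `1 ≤ a ≤ n`. -/
lemma I_sign (n a : ℕ) (h1 : 1 ≤ a) (han : a ≤ n) : 0 < (-1:ℝ)^a * I n a := by
  have hI : I n a = ∑ i ∈ range a, ∫ x in ((i:ℝ))..((i:ℝ)+1), g n a x := by
    have := intervalIntegral.sum_integral_adjacent_intervals
      (a := fun i : ℕ => (i:ℝ)) (f := g n a) (μ := MeasureTheory.volume) (n := a)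
      (fun k _ => (g_cont n a).intervalIntegrable _ _)
    norm_num at this
    show (∫ x in (0:ℝ)..(a:ℝ), g n a x) = ∑ i ∈ range a, ∫ x in ((i:ℝ))..((i:ℝ)+1), g n a x
    exact this.symm
  have hterm : ∀ i ∈ range a, (-1:ℝ)^a * ∫ x in ((i:ℝ))..((i:ℝ)+1), g n a x
      = (-1:ℝ)^(a+i+1) * L n a (i+1) := by
    intro i _
    unfold L
    have hc : (((i+1:ℕ)):ℝ) = (i:ℝ)+1 := by push_cast; ring
    rw [hc]
    have : ((i:ℝ)+1-1) = (i:ℝ) := by ring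
    rw [this]
    rw [← mul_assoc, ← pow_add]
    congr 1
    rw [show a+i+1+(i+1) = 2*(i+1)+a by omega, pow_add, pow_mul]
    norm_num
  have := alt_sum_pos (L n a) a h1 (fun c hc1 hc2 => L_pos n a c hc1 hc2 han)
    (fun c hc1 hc2 => L_mono n a c hc1 hc2 han)
  rw [hI, Finset.mul_sum, sum_congr rfl hterm]
  exact this.1

lemma I_abs (n a : ℕ) (h1 : 1 ≤ a) (han : a ≤ n) : |I n a| = (-1:ℝ)^a * I n a := by
  have h := I_sign n a h1 han
  rw [← abs_of_pos h, abs_mul, abs_pow, abs_neg, abs_one, one_pow, one_mul]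

theorem torsion_eq_alpha (n : ℕ) (hn : 1 ≤ n) :
    2 * ∑ j ∈ Finset.range n,
        (-1 : ℝ)^(j+1) * (-2*π * C n * ((2*n).choose j : ℝ) * I n (n - j))
      = (-1 : ℝ)^n * α n ∧ 0 < α n := by
  have hC : 0 < C n := by
    apply div_pos
    · apply Real.rpow_pos_of_pos
      have := Real.pi_pos; linarith
    · apply Real.Gamma_pos_of_pos
      positivity
  have habs : ∀ j ∈ Finset.range n, ((2*n).choose j : ℝ) * |I n (n - j)|
      = ((2*n).choose j : ℝ) * ((-1:ℝ)^(n-j) * I n (n-j)) := by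
    intro j hj
    rw [I_abs n (n-j) (by simp at hj; omega) (by omega)]
  constructor
  · rw [α, sum_congr rfl habs, Finset.mul_sum, Finset.mul_sum, Finset.mul_sum]
    apply sum_congr rfl
    intro j hj
    simp only [mem_range] at hj
    have hsgn : (-1:ℝ)^n * (-1:ℝ)^(n-j) = (-1:ℝ)^j := by
      rw [← pow_add, show n + (n-j) = j + 2*(n-j) by omega, pow_add, pow_mul]
      norm_num
    have : (-1:ℝ)^(j+1) = -(-1:ℝ)^j := by rw [pow_succ]; ring
    rw [this]
    linear_combination (-(4*π*C n*((2*n).choose j : ℝ)*I n (n-j))) * hsgn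
  · rw [α]
    apply mul_pos (by positivity)
    apply Finset.sum_pos'
    · intro j hj
      positivity
    · refine ⟨0, Finset.mem_range.mpr hn, ?_⟩
      have h := I_sign n n hn le_rfl
      have : I n n ≠ 0 := by
        intro h0; rw [h0, mul_zero] at h; exact lt_irrefl 0 h
      have habs0 : 0 < |I n (n-0)| := by
        simpa using abs_pos.mpr this
      have : (0:ℝ) < ((2*n).choose 0 : ℝ) := by norm_num
      positivity
end

section
/- α(2) = 62/(45π²). -/
open Real

lemma hI1 : I 2 1 = -17/15 := by
  unfold I
  rw [show (2+1) = 3 from rfl, show (Finset.range 3).erase 1 = {0,2} from by decide,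
    show ((1:ℕ):ℝ) = 1 from by norm_num]
  have h : Set.EqOn (fun x : ℝ => ∏ k ∈ ({0,2}:Finset ℕ), ((k:ℝ)^2 - x^2))
      (fun x : ℝ => x^4 - 4*x^2) (Set.uIcc 0 1) := by
    intro x _
    simp [Finset.prod_insert, Finset.prod_singleton]
    ring
  rw [intervalIntegral.integral_congr h,
    intervalIntegral.integral_sub (intervalIntegral.intervalIntegrable_pow 4)
      ((intervalIntegral.intervalIntegrable_pow 2).const_mul 4),
    intervalIntegral.integral_const_mul, integral_pow, integral_pow]
  norm_num

lemma hI2 : I 2 2 = 56/15 := by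
  unfold I
  rw [show (2+1) = 3 from rfl, show (Finset.range 3).erase 2 = {0,1} from by decide,
    show ((2:ℕ):ℝ) = 2 from by norm_num]
  have h : Set.EqOn (fun x : ℝ => ∏ k ∈ ({0,1}:Finset ℕ), ((k:ℝ)^2 - x^2))
      (fun x : ℝ => x^4 - x^2) (Set.uIcc 0 2) := by
    intro x _
    simp [Finset.prod_insert, Finset.prod_singleton]
    ring
  rw [intervalIntegral.integral_congr h,
    intervalIntegral.integral_sub (intervalIntegral.intervalIntegrable_pow 4)
      (intervalIntegral.intervalIntegrable_pow 2),
    integral_pow, integral_pow]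
  norm_num

lemma hC2 : C 2 = 1 / (24 * π^3) := by
  unfold C
  have h : (0:ℝ) < 4*π := by positivity
  rw [show -(((2:ℕ):ℝ) + 1/2) = -(5/2) by norm_num,
    show ((2:ℕ):ℝ) + 1/2 = 5/2 by norm_num]
  rw [show (5:ℝ)/2 = 3/2 + 1 by norm_num, Real.Gamma_add_one (by norm_num),
    show (3:ℝ)/2 = 1/2 + 1 by norm_num, Real.Gamma_add_one (by norm_num),
    Real.Gamma_one_half_eq]
  rw [show -((1:ℝ)/2 + 1 + 1) = -(2 + 1/2) by norm_num,
    Real.rpow_neg h.le, Real.rpow_add h, ← Real.sqrt_eq_rpow,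
    show ((2:ℝ)) = ((2:ℕ):ℝ) by norm_num, Real.rpow_natCast,
    show (4:ℝ)*π = 2^2*π by norm_num, Real.sqrt_mul (by positivity), Real.sqrt_sq (by norm_num)]
  have hs : Real.sqrt π * Real.sqrt π = π := Real.mul_self_sqrt pi_pos.le
  have hs0 : Real.sqrt π ≠ 0 := by positivity
  field_simp
  ring_nf
  nlinarith [hs, pi_pos]

theorem alpha_two : α 2 = 62 / (45 * π^2) := by
  unfold α
  rw [Finset.sum_range_succ, Finset.sum_range_succ, Finset.sum_range_zero, hC2]
  norm_num [hI1, hI2, abs_of_nonneg, abs_of_nonpos]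
  have hπ : π ≠ 0 := pi_ne_zero
  field_simp
  ring
end

section
/- α(3) = 221/(35π³). -/
open Real

lemma integral_poly (a b c u : ℝ) :
    ∫ x in (0:ℝ)..u, (a*x^2 + b*x^4 + c*x^6) = a*u^3/3 + b*u^5/5 + c*u^7/7 := by
  have hderiv : ∀ x ∈ Set.uIcc (0:ℝ) u,
      HasDerivAt (fun x : ℝ => a*x^3/3 + b*x^5/5 + c*x^7/7)
        (a*x^2 + b*x^4 + c*x^6) x := by
    intro x _
    have h := (((hasDerivAt_pow 3 x).const_mul (a/3)).add
      ((hasDerivAt_pow 5 x).const_mul (b/5))).add ((hasDerivAt_pow 7 x).const_mul (c/7))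
    have e1 : (fun x : ℝ => a*x^3/3 + b*x^5/5 + c*x^7/7) =
        ((fun y => a / 3 * y ^ 3) + fun y => b / 5 * y ^ 5) + fun y => c / 7 * y ^ 7 := by
      funext y; simp only [Pi.add_apply]; ring
    rw [e1]
    exact h.congr_deriv (by
      rw [show (3:ℕ) - 1 = 2 from rfl, show (5:ℕ) - 1 = 4 from rfl, show (7:ℕ) - 1 = 6 from rfl]
      push_cast; ring)
  rw [intervalIntegral.integral_eq_sub_of_hasDerivAt hderiv
    ((Continuous.intervalIntegrable (by continuity) 0 u))]
  ring

lemma I_eq (aa : ℕ) (p q r : ℝ)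
    (h : ∀ x : ℝ, (∏ k ∈ (Finset.range 4).erase aa, ((k:ℝ)^2 - x^2)) = p*x^2 + q*x^4 + r*x^6) :
    I 3 aa = p*(aa:ℝ)^3/3 + q*(aa:ℝ)^5/5 + r*(aa:ℝ)^7/7 := by
  unfold I
  rw [show (3+1) = 4 from rfl]
  rw [intervalIntegral.integral_congr (g := fun x => p*x^2 + q*x^4 + r*x^6)
    (fun x _ => h x), integral_poly]

lemma I31 : I 3 1 = -334/35 := by
  have := I_eq 1 (-36) 13 (-1) (by
    intro x
    have h : (Finset.range 4).erase 1 = {0, 2, 3} := by decide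
    rw [h]
    simp [Finset.prod_insert, Finset.mem_insert]
    ring)
  rw [this]; norm_num

lemma I32 : I 3 2 = 152/7 := by
  have := I_eq 2 (-9) 10 (-1) (by
    intro x
    have h : (Finset.range 4).erase 2 = {0, 1, 3} := by decide
    rw [h]
    simp [Finset.prod_insert, Finset.mem_insert]
    ring)
  rw [this]; norm_num

lemma I33 : I 3 3 = -738/7 := by
  have := I_eq 3 (-4) 5 (-1) (by
    intro x
    have h : (Finset.range 4).erase 3 = {0, 1, 2} := by decide
    rw [h]
    simp [Finset.prod_insert, Finset.mem_insert]
    ring)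
  rw [this]; norm_num

lemma C3 : C 3 = 1/(240*π^4) := by
  have hs : Real.sqrt π ^ 2 = π := Real.sq_sqrt pi_pos.le
  have hs0 : Real.sqrt π ≠ 0 := by positivity
  have hΓ : Real.Gamma ((3:ℕ) + 1/2 : ℝ) = 15/8 * Real.sqrt π := by
    rw [show ((3:ℕ) + 1/2 : ℝ) = 5/2 + 1 by norm_num, Real.Gamma_add_one (by norm_num),
      show (5/2:ℝ) = 3/2 + 1 by norm_num, Real.Gamma_add_one (by norm_num),
      show (3/2:ℝ) = 1/2 + 1 by norm_num, Real.Gamma_add_one (by norm_num),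
      Real.Gamma_one_half_eq]
    ring
  have h4 : (0:ℝ) < 4*π := by positivity
  have hr : (4*π) ^ (-(((3:ℕ):ℝ) + 1/2)) = 1/(128*π^3*Real.sqrt π) := by
    rw [Real.rpow_neg h4.le, show (((3:ℕ):ℝ) + 1/2) = ((3:ℕ):ℝ) + 1/2 from rfl,
      Real.rpow_add h4, Real.rpow_natCast, ← Real.sqrt_eq_rpow,
      show Real.sqrt (4*π) = 2 * Real.sqrt π by
        rw [show (4:ℝ)*π = (2*Real.sqrt π)^2 by rw [mul_pow, hs]; norm_num,
          Real.sqrt_sq (by positivity)]]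
    rw [one_div, inv_inj]
    ring
  unfold C
  rw [hΓ, hr]
  have hπ : π ≠ 0 := pi_ne_zero
  field_simp
  linear_combination (-1920) * hs

theorem alpha_three : α 3 = 221 / (35 * π^3) := by
  unfold α
  rw [C3, Finset.sum_range_succ, Finset.sum_range_succ, Finset.sum_range_succ,
    Finset.sum_range_zero]
  norm_num [I31, I32, I33, Nat.choose]
  have hπ : π ≠ 0 := pi_ne_zero
  field_simp
  ring
end

section
/- α(4) = 32204/(945π⁴). -/
open Real

lemma integral_poly8 (c2 c4 c6 c8 : ℝ) (b : ℝ) :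
    ∫ x in (0:ℝ)..b, (c2*x^2 + c4*x^4 + c6*x^6 + c8*x^8) =
      c2*b^3/3 + c4*b^5/5 + c6*b^7/7 + c8*b^9/9 := by
  have h : ∀ x ∈ Set.uIcc (0:ℝ) b,
      HasDerivAt (fun x : ℝ => c2*x^3/3 + c4*x^5/5 + c6*x^7/7 + c8*x^9/9)
        (c2*x^2 + c4*x^4 + c6*x^6 + c8*x^8) x := by
    intro x _
    have h3 := ((hasDerivAt_pow 3 x).const_mul c2).div_const 3
    have h5 := ((hasDerivAt_pow 5 x).const_mul c4).div_const 5
    have h7 := ((hasDerivAt_pow 7 x).const_mul c6).div_const 7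
    have h9 := ((hasDerivAt_pow 9 x).const_mul c8).div_const 9
    refine (((h3.add h5).add h7).add h9).congr_deriv ?_
    norm_num
    ring
  rw [intervalIntegral.integral_eq_sub_of_hasDerivAt h
    (Continuous.intervalIntegrable (by continuity) 0 b)]
  ring

lemma I41 : I 4 1 = -46378/315 := by
  unfold I
  rw [show (Finset.range 5).erase 1 = {0,2,3,4} from by decide]
  rw [intervalIntegral.integral_congr (g := fun x => (-576:ℝ)*x^2 + 244*x^4 + (-29)*x^6 + 1*x^8)
    (by intro x _; norm_num [Finset.prod_insert, Finset.mem_insert]; ring)]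
  rw [integral_poly8]
  norm_num

lemma I42 : I 4 2 = 87904/315 := by
  unfold I
  rw [show (Finset.range 5).erase 2 = {0,1,3,4} from by decide]
  rw [intervalIntegral.integral_congr (g := fun x => (-144:ℝ)*x^2 + 169*x^4 + (-26)*x^6 + 1*x^8)
    (by intro x _; norm_num [Finset.prod_insert, Finset.mem_insert]; ring)]
  rw [integral_poly8]
  norm_num

lemma I43 : I 4 3 = -4338/5 := by
  unfold I
  rw [show (Finset.range 5).erase 3 = {0,1,2,4} from by decide]
  rw [intervalIntegral.integral_congr (g := fun x => (-64:ℝ)*x^2 + 84*x^4 + (-21)*x^6 + 1*x^8)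
    (by intro x _; norm_num [Finset.prod_insert, Finset.mem_insert]; ring)]
  rw [integral_poly8]
  norm_num

lemma I44 : I 4 4 = 253184/45 := by
  unfold I
  rw [show (Finset.range 5).erase 4 = {0,1,2,3} from by decide]
  rw [intervalIntegral.integral_congr (g := fun x => (-36:ℝ)*x^2 + 49*x^4 + (-14)*x^6 + 1*x^8)
    (by intro x _; norm_num [Finset.prod_insert, Finset.mem_insert]; ring)]
  rw [integral_poly8]
  norm_num

lemma C4_mul : 4*π * C 4 = 1 / (840 * π^4) := by
  have hπ : (0:ℝ) < π := pi_pos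
  have hΓ : Real.Gamma (((4:ℕ):ℝ) + 1/2) = 105/16 * Real.sqrt π := by
    have e0 : Real.Gamma (1/2) = Real.sqrt π := Real.Gamma_one_half_eq
    have e1 : Real.Gamma (3/2) = 1/2 * Real.sqrt π := by
      rw [show (3/2:ℝ) = 1/2 + 1 by norm_num, Real.Gamma_add_one (by norm_num), e0]
    have e2 : Real.Gamma (5/2) = 3/4 * Real.sqrt π := by
      rw [show (5/2:ℝ) = 3/2 + 1 by norm_num, Real.Gamma_add_one (by norm_num), e1]; ring
    have e3 : Real.Gamma (7/2) = 15/8 * Real.sqrt π := by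
      rw [show (7/2:ℝ) = 5/2 + 1 by norm_num, Real.Gamma_add_one (by norm_num), e2]; ring
    rw [show (((4:ℕ):ℝ) + 1/2) = 7/2 + 1 by norm_num, Real.Gamma_add_one (by norm_num), e3]
    ring
  have h4π : (0:ℝ) < 4*π := by positivity
  have hpow : (4*π) ^ (-(((4:ℕ):ℝ) + 1/2)) = 1 / ((4*π)^4 * (2 * Real.sqrt π)) := by
    rw [show -(((4:ℕ):ℝ) + 1/2) = -(9/2) by norm_num, Real.rpow_neg h4π.le,
      show (9/2:ℝ) = (4:ℕ) + 1/2 by norm_num, Real.rpow_add h4π,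
      Real.rpow_natCast, ← Real.sqrt_eq_rpow,
      show (4*π : ℝ) = 2^2 * π by ring, Real.sqrt_mul (by norm_num), Real.sqrt_sq (by norm_num), one_div]
  unfold C
  rw [hΓ, hpow]
  have hsne : Real.sqrt π ≠ 0 := by positivity
  field_simp
  ring_nf
  rw [Real.sq_sqrt hπ.le]

theorem alpha_four : α 4 = 32204 / (945 * π^4) := by
  have hπ : π ≠ 0 := pi_ne_zero
  unfold α
  rw [Finset.sum_range_succ, Finset.sum_range_succ, Finset.sum_range_succ,
    Finset.sum_range_one]
  norm_num [I41, I42, I43, I44, Nat.choose, abs_of_nonneg, abs_of_nonpos, C4_mul]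
  field_simp
  ring
end

section
/- α(5) = 1339661/(6237π⁵). -/
open Real

lemma integral_poly10 (c2 c4 c6 c8 b : ℝ) :
    ∫ x in (0:ℝ)..b, (c2*x^2 + c4*x^4 + c6*x^6 + c8*x^8 - x^10)
      = c2*b^3/3 + c4*b^5/5 + c6*b^7/7 + c8*b^9/9 - b^11/11 := by
  have h : ∀ x ∈ Set.uIcc (0:ℝ) b,
      HasDerivAt (fun x : ℝ => c2/3*x^3 + c4/5*x^5 + c6/7*x^7 + c8/9*x^9 - 1/11*x^11)
        (c2*x^2 + c4*x^4 + c6*x^6 + c8*x^8 - x^10) x := by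
    intro x _
    have H := (((((hasDerivAt_pow 3 x).const_mul (c2/3)).add
      ((hasDerivAt_pow 5 x).const_mul (c4/5))).add
      ((hasDerivAt_pow 7 x).const_mul (c6/7))).add
      ((hasDerivAt_pow 9 x).const_mul (c8/9))).sub
      ((hasDerivAt_pow 11 x).const_mul (1/11))
    convert H using 1
    · rfl
    · rfl
    · rfl
    · push_cast
      ring
  have hint : IntervalIntegrable
      (fun x : ℝ => c2*x^2 + c4*x^4 + c6*x^6 + c8*x^8 - x^10) MeasureTheory.volume 0 b := by
    apply Continuous.intervalIntegrable
    continuity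
  rw [intervalIntegral.integral_eq_sub_of_hasDerivAt h hint]
  ring

lemma I51 : I 5 1 = -1384968/385 := by
  have h : ∀ x : ℝ, ∏ k ∈ (Finset.range 6).erase 1, ((k:ℝ)^2 - x^2)
      = (-14400)*x^2 + 6676*x^4 + (-969)*x^6 + 54*x^8 - x^10 := by
    intro x
    rw [show (Finset.range 6).erase 1 = {0,2,3,4,5} from by decide]
    simp [Finset.prod_insert, Finset.mem_insert]
    ring
  rw [I]
  norm_num
  simp only [h]
  rw [integral_poly10]
  norm_num

lemma I52 : I 5 2 = 1006624/165 := by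
  have h : ∀ x : ℝ, ∏ k ∈ (Finset.range 6).erase 2, ((k:ℝ)^2 - x^2)
      = (-3600)*x^2 + 4369*x^4 + (-819)*x^6 + 51*x^8 - x^10 := by
    intro x
    rw [show (Finset.range 6).erase 2 = {0,1,3,4,5} from by decide]
    simp [Finset.prod_insert, Finset.mem_insert]
    ring
  rw [I]
  norm_num
  simp only [h]
  rw [integral_poly10]
  norm_num

lemma I53 : I 5 3 = -825048/55 := by
  have h : ∀ x : ℝ, ∏ k ∈ (Finset.range 6).erase 3, ((k:ℝ)^2 - x^2)
      = (-1600)*x^2 + 2164*x^4 + (-609)*x^6 + 46*x^8 - x^10 := by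
    intro x
    rw [show (Finset.range 6).erase 3 = {0,1,2,4,5} from by decide]
    simp [Finset.prod_insert, Finset.mem_insert]
    ring
  rw [I]
  norm_num
  simp only [h]
  rw [integral_poly10]
  norm_num

lemma I54 : I 5 4 = 9870592/165 := by
  have h : ∀ x : ℝ, ∏ k ∈ (Finset.range 6).erase 4, ((k:ℝ)^2 - x^2)
      = (-900)*x^2 + 1261*x^4 + (-399)*x^6 + 39*x^8 - x^10 := by
    intro x
    rw [show (Finset.range 6).erase 4 = {0,1,2,3,5} from by decide]
    simp [Finset.prod_insert, Finset.mem_insert]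
    ring
  rw [I]
  norm_num
  simp only [h]
  rw [integral_poly10]
  norm_num

lemma I55 : I 5 5 = -16067000/33 := by
  have h : ∀ x : ℝ, ∏ k ∈ (Finset.range 6).erase 5, ((k:ℝ)^2 - x^2)
      = (-576)*x^2 + 820*x^4 + (-273)*x^6 + 30*x^8 - x^10 := by
    intro x
    rw [show (Finset.range 6).erase 5 = {0,1,2,3,4} from by decide]
    simp [Finset.prod_insert, Finset.mem_insert]
    ring
  rw [I]
  norm_num
  simp only [h]
  rw [integral_poly10]
  norm_num

lemma gamma_11_2 : Real.Gamma ((5:ℝ) + 1/2) = 945/32 * Real.sqrt π := by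
  have h1 : ((5:ℝ) + 1/2) = (9/2 : ℝ) + 1 := by norm_num
  rw [h1, Real.Gamma_add_one (by norm_num),
    show (9/2:ℝ) = (7/2:ℝ) + 1 from by norm_num, Real.Gamma_add_one (by norm_num),
    show (7/2:ℝ) = (5/2:ℝ) + 1 from by norm_num, Real.Gamma_add_one (by norm_num),
    show (5/2:ℝ) = (3/2:ℝ) + 1 from by norm_num, Real.Gamma_add_one (by norm_num),
    show (3/2:ℝ) = (1/2:ℝ) + 1 from by norm_num, Real.Gamma_add_one (by norm_num),
    Real.Gamma_one_half_eq]
  ring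

lemma rpow_4pi : (4*π:ℝ) ^ (-((5:ℝ) + 1/2)) = 1/((4*π)^5 * (2 * Real.sqrt π)) := by
  have hpos : (0:ℝ) < 4*π := by positivity
  have h1 : (4*π:ℝ) ^ (-((5:ℝ) + 1/2)) = ((4*π:ℝ) ^ (((5:ℝ)) + 1/2))⁻¹ := by
    rw [← Real.rpow_neg hpos.le]
  rw [h1, Real.rpow_add hpos]
  have h2 : (4*π:ℝ) ^ (5:ℝ) = (4*π)^(5:ℕ) := by
    rw [← Real.rpow_natCast (4*π) 5]; norm_num
  have h3 : (4*π:ℝ) ^ ((1:ℝ)/2) = 2 * Real.sqrt π := by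
    rw [show (4*π:ℝ) = (2*Real.sqrt π)^2 from by
        rw [mul_pow, Real.sq_sqrt Real.pi_pos.le]; norm_num,
      ← Real.rpow_natCast (2*Real.sqrt π) 2, ← Real.rpow_mul (by positivity)]
    norm_num
  rw [h2, h3]
  field_simp

theorem alpha_five : α 5 = 1339661 / (6237 * π^5) := by
  have hsum : ∑ j ∈ Finset.range 5, (((2*5).choose j : ℕ) : ℝ) * |I 5 (5 - j)|
      = 107172880/33 := by
    rw [Finset.sum_range_succ, Finset.sum_range_succ, Finset.sum_range_succ,
      Finset.sum_range_succ, Finset.sum_range_succ, Finset.sum_range_zero]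
    norm_num [I51, I52, I53, I54, I55, Nat.choose, abs_of_neg, abs_of_pos]
  have hsqrt : Real.sqrt π * Real.sqrt π = π := Real.mul_self_sqrt Real.pi_pos.le
  have hsne : Real.sqrt π ≠ 0 := by positivity
  have hpne : π ≠ 0 := Real.pi_ne_zero
  rw [α, C]
  push_cast [Nat.cast_ofNat] at hsum ⊢
  rw [hsum, gamma_11_2, rpow_4pi]
  field_simp
  ring_nf
  rw [show Real.sqrt π ^ 2 = π from by rw [sq]; exact hsqrt]
end

section
/- For every integer n ≥ 2, α(n) ≥ (n/(2π)) · α(n−1). -/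
open Real

open Finset

noncomputable def Qf (m a : ℕ) (x : ℝ) : ℝ :=
  ∏ k ∈ (Finset.range (m+1)).erase a, ((k:ℝ)^2 - x^2)

noncomputable def Uf (m : ℕ) (x : ℝ) : ℝ :=
  ∏ k ∈ Finset.range (m+1), ((k:ℝ)^2 - x^2)

lemma prod_shift (g : ℕ → ℝ) {a n : ℕ} (ha : a < n) :
    (∏ k ∈ (Finset.range n).erase a, g (k+1)) * (g 0 * g (a+1)) =
    (∏ k ∈ (Finset.range n).erase a, g k) * (g n * g a) := by
  have h1 : (∏ k ∈ (Finset.range n).erase a, g (k+1)) * g (a+1)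
      = ∏ k ∈ Finset.range n, g (k+1) :=
    Finset.prod_erase_mul _ _ (mem_range.2 ha)
  have h2 : (∏ k ∈ (Finset.range n).erase a, g k) * g a
      = ∏ k ∈ Finset.range n, g k :=
    Finset.prod_erase_mul _ _ (mem_range.2 ha)
  have h3 : ∏ k ∈ Finset.range (n+1), g k = (∏ k ∈ Finset.range n, g (k+1)) * g 0 :=
    Finset.prod_range_succ' g n
  have h4 : ∏ k ∈ Finset.range (n+1), g k = (∏ k ∈ Finset.range n, g k) * g n :=
    Finset.prod_range_succ g n
  calc (∏ k ∈ (Finset.range n).erase a, g (k+1)) * (g 0 * g (a+1))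
      = ((∏ k ∈ (Finset.range n).erase a, g (k+1)) * g (a+1)) * g 0 := by ring
    _ = (∏ k ∈ Finset.range n, g (k+1)) * g 0 := by rw [h1]
    _ = (∏ k ∈ Finset.range n, g k) * g n := by rw [← h3, h4]
    _ = ((∏ k ∈ (Finset.range n).erase a, g k) * g a) * g n := by rw [h2]
    _ = (∏ k ∈ (Finset.range n).erase a, g k) * (g n * g a) := by ring

lemma prod_shift' (g : ℕ → ℝ) (n : ℕ) :
    (∏ k ∈ Finset.range n, g (k+1)) * g 0 = (∏ k ∈ Finset.range n, g k) * g n := by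
  rw [← Finset.prod_range_succ' g n, Finset.prod_range_succ g n]

lemma minus_fac (s : Finset ℕ) (x : ℝ) :
    ∏ k ∈ s, ((k:ℝ)^2 - x^2) = (∏ k ∈ s, ((k:ℝ) - x)) * ∏ k ∈ s, ((k:ℝ) + x) := by
  rw [← Finset.prod_mul_distrib]
  exact Finset.prod_congr rfl (fun k _ => by ring)

lemma Uf_id (m : ℕ) (x : ℝ) :
    Uf m (x+1) * (x * ((m:ℝ) - x)) = Uf m x * ((-1 - x) * ((m:ℝ) + 1 + x)) := by
  have h1 := prod_shift' (fun k => (k:ℝ) - 1 - x) (m+1)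
  have h2 := prod_shift' (fun k => (k:ℝ) + x) (m+1)
  push_cast at h1 h2
  have e0 : ∏ k ∈ Finset.range (m+1), ((k:ℝ) + 1 - 1 - x)
      = ∏ k ∈ Finset.range (m+1), ((k:ℝ) - x) :=
    Finset.prod_congr rfl (fun k _ => by ring)
  have e1 : ∏ k ∈ Finset.range (m+1), ((k:ℝ) - 1 - x)
      = ∏ k ∈ Finset.range (m+1), ((k:ℝ) - (x+1)) :=
    Finset.prod_congr rfl (fun k _ => by ring)
  have e2 : ∏ k ∈ Finset.range (m+1), ((k:ℝ) + 1 + x)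
      = ∏ k ∈ Finset.range (m+1), ((k:ℝ) + (x+1)) :=
    Finset.prod_congr rfl (fun k _ => by ring)
  rw [e0, e1] at h1
  rw [e2] at h2
  rw [Uf, Uf, minus_fac, minus_fac]
  -- h1 : (∏ (k-x)) * (0-1-x) = (∏ (k-(x+1))) * (m+1-1-x)
  -- h2 : (∏ (k+(x+1))) * (0+x) = (∏ (k+x)) * (m+1+x)
  linear_combination (∏ k ∈ Finset.range (m+1), ((k:ℝ) + (x+1))) * x * h1.symm +
    (∏ k ∈ Finset.range (m+1), ((k:ℝ) - x)) * (-1-x) * h2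

theorem tst : True := trivial

lemma Qf_id {m a : ℕ} (ha : a < m + 1) (x : ℝ) :
    Qf m a (x+1) * ((x * ((a:ℝ) + 1 + x)) * (((a:ℝ) - 1 - x) * ((m:ℝ) - x))) =
    Qf m a x * (((-1 - x) * ((a:ℝ) - x)) * (((m:ℝ) + 1 + x) * ((a:ℝ) + x))) := by
  have h1 := prod_shift (fun k => (k:ℝ) - 1 - x) ha
  have h2 := prod_shift (fun k => (k:ℝ) + x) ha
  push_cast at h1 h2
  have e0 : ∏ k ∈ (Finset.range (m+1)).erase a, ((k:ℝ) + 1 - 1 - x)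
      = ∏ k ∈ (Finset.range (m+1)).erase a, ((k:ℝ) - x) :=
    Finset.prod_congr rfl (fun k _ => by ring)
  have e1 : ∏ k ∈ (Finset.range (m+1)).erase a, ((k:ℝ) - 1 - x)
      = ∏ k ∈ (Finset.range (m+1)).erase a, ((k:ℝ) - (x+1)) :=
    Finset.prod_congr rfl (fun k _ => by ring)
  have e2 : ∏ k ∈ (Finset.range (m+1)).erase a, ((k:ℝ) + 1 + x)
      = ∏ k ∈ (Finset.range (m+1)).erase a, ((k:ℝ) + (x+1)) :=
    Finset.prod_congr rfl (fun k _ => by ring)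
  rw [e0, e1] at h1
  rw [e2] at h2
  rw [Qf, Qf, minus_fac, minus_fac]
  -- h1 : (∏ (k-x)) * ((0-1-x) * (a+1-1-x)) = (∏ (k-(x+1))) * ((m+1-1-x) * (a-1-x))
  -- h2 : (∏ (k+(x+1))) * ((0+x) * (a+1+x)) = (∏ (k+x)) * ((m+1+x) * (a+x))
  linear_combination (∏ k ∈ (Finset.range (m+1)).erase a, ((k:ℝ) + (x+1))) * (x * ((a:ℝ)+1+x)) * h1.symm +
    (∏ k ∈ (Finset.range (m+1)).erase a, ((k:ℝ) - x)) * ((-1-x) * ((a:ℝ)-x)) * h2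

lemma sign_split {r : ℕ} (s : Finset ℕ) (hs : ∀ k ∈ s, r + 1 ≤ k) {x : ℝ}
    (hx0 : (r:ℝ) ≤ x) (hx1 : x ≤ (r:ℝ)+1) (hx2 : 0 ≤ x) :
    0 ≤ (-1:ℝ)^(r+1) * ((∏ k ∈ Finset.range (r+1), ((k:ℝ)^2 - x^2)) * ∏ k ∈ s, ((k:ℝ)^2 - x^2)) := by
  have hneg : ∏ k ∈ Finset.range (r+1), ((k:ℝ)^2 - x^2)
      = (-1:ℝ)^(r+1) * ∏ k ∈ Finset.range (r+1), (x^2 - (k:ℝ)^2) := by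
    calc ∏ k ∈ Finset.range (r+1), ((k:ℝ)^2 - x^2)
        = ∏ k ∈ Finset.range (r+1), ((-1) * (x^2 - (k:ℝ)^2)) :=
          Finset.prod_congr rfl (fun k _ => by ring)
      _ = (∏ _k ∈ Finset.range (r+1), (-1:ℝ)) * ∏ k ∈ Finset.range (r+1), (x^2 - (k:ℝ)^2) :=
          Finset.prod_mul_distrib
      _ = (-1:ℝ)^(r+1) * ∏ k ∈ Finset.range (r+1), (x^2 - (k:ℝ)^2) := by
          rw [Finset.prod_const, Finset.card_range]
  rw [hneg]
  have hsq : ((-1:ℝ)^(r+1)) * ((-1:ℝ)^(r+1)) = 1 := by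
    rw [← pow_add]
    exact Even.neg_one_pow ⟨r+1, rfl⟩
  have h1 : 0 ≤ ∏ k ∈ Finset.range (r+1), (x^2 - (k:ℝ)^2) := by
    apply Finset.prod_nonneg
    intro k hk
    have hk' : (k:ℝ) ≤ x := by
      have : (k:ℝ) ≤ r := by exact_mod_cast Nat.lt_succ_iff.mp (Finset.mem_range.mp hk)
      linarith
    nlinarith [Nat.cast_nonneg (α := ℝ) k]
  have h2 : 0 ≤ ∏ k ∈ s, ((k:ℝ)^2 - x^2) := by
    apply Finset.prod_nonneg
    intro k hk
    have hk' : x ≤ (k:ℝ) := by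
      have : ((r:ℝ)+1) ≤ k := by exact_mod_cast hs k hk
      linarith
    nlinarith
  calc (0:ℝ) ≤ (∏ k ∈ Finset.range (r+1), (x^2 - (k:ℝ)^2)) * ∏ k ∈ s, ((k:ℝ)^2 - x^2) :=
        mul_nonneg h1 h2
    _ = (-1:ℝ)^(r+1) * ((-1:ℝ)^(r+1) * ((∏ k ∈ Finset.range (r+1), (x^2 - (k:ℝ)^2)) * ∏ k ∈ s, ((k:ℝ)^2 - x^2))) := by
        rw [← mul_assoc, hsq, one_mul]
    _ = (-1:ℝ)^(r+1) * (((-1:ℝ)^(r+1) * ∏ k ∈ Finset.range (r+1), (x^2 - (k:ℝ)^2)) * ∏ k ∈ s, ((k:ℝ)^2 - x^2)) := by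
        ring

lemma Uf_sign {m r : ℕ} (hrm : r < m) {t : ℝ} (ht0 : 0 ≤ t) (ht1 : t ≤ 1) :
    0 ≤ (-1:ℝ)^(r+1) * Uf m (t + r) := by
  have hsplit : (∏ k ∈ Finset.range (r+1), ((k:ℝ)^2 - (t+r)^2)) *
      ∏ k ∈ Finset.Ico (r+1) (m+1), ((k:ℝ)^2 - (t+r)^2) = Uf m (t+r) := by
    rw [Uf, ← Finset.prod_range_mul_prod_Ico _ (by omega : r+1 ≤ m+1)]
  rw [← hsplit]
  exact sign_split _ (fun k hk => (Finset.mem_Ico.mp hk).1)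
    (by linarith) (by linarith) (by positivity)

lemma Qf_sign {m a r : ℕ} (hra : r < a) (ham : a ≤ m) {t : ℝ} (ht0 : 0 ≤ t) (ht1 : t ≤ 1) :
    0 ≤ (-1:ℝ)^(r+1) * Qf m a (t + r) := by
  have hset : (Finset.range (m+1)).erase a
      = Finset.range (r+1) ∪ ((Finset.Ico (r+1) (m+1)).erase a) := by
    ext k
    simp only [Finset.mem_erase, Finset.mem_union, Finset.mem_range, Finset.mem_Ico]
    omega
  have hdisj : Disjoint (Finset.range (r+1)) ((Finset.Ico (r+1) (m+1)).erase a) := by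
    rw [Finset.disjoint_left]
    intro k hk hk'
    simp only [Finset.mem_range] at hk
    simp only [Finset.mem_erase, Finset.mem_Ico] at hk'
    omega
  rw [Qf, hset, Finset.prod_union hdisj]
  exact sign_split _ (fun k hk => (Finset.mem_Ico.mp (Finset.mem_of_mem_erase hk)).1)
    (by linarith) (by linarith) (by positivity)

lemma alt_sum (v : ℕ → ℝ) : ∀ (a : ℕ), (∀ r, r < a → 0 ≤ v r) → (∀ r, r + 1 < a → v r ≤ v (r+1)) →
    (0 ≤ ∑ r ∈ Finset.range a, (-1:ℝ)^(a+r+1) * v r) ∧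
    (∀ b, a = b + 1 → ∑ r ∈ Finset.range a, (-1:ℝ)^(a+r+1) * v r ≤ v b) := by
  intro a
  induction a with
  | zero => intro _ _; simp
  | succ a ih =>
    intro h0 hm
    obtain ⟨ih0, ih1⟩ := ih (fun r hr => h0 r (by omega)) (fun r hr => hm r (by omega))
    have hsum : ∑ r ∈ Finset.range (a+1), (-1:ℝ)^(a+1+r+1) * v r
        = v a - ∑ r ∈ Finset.range a, (-1:ℝ)^(a+r+1) * v r := by
      rw [Finset.sum_range_succ]
      have h1 : (-1:ℝ)^(a+1+a+1) = 1 := Even.neg_one_pow ⟨a+1, by ring⟩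
      rw [h1, one_mul]
      have h2 : ∀ r : ℕ, (-1:ℝ)^(a+1+r+1) = -((-1:ℝ)^(a+r+1)) := by
        intro r
        rw [show a+1+r+1 = (a+r+1)+1 by ring, pow_succ]
        ring
      rw [show (∑ r ∈ Finset.range a, (-1:ℝ)^(a+1+r+1) * v r)
          = - ∑ r ∈ Finset.range a, (-1:ℝ)^(a+r+1) * v r by
        rw [← Finset.sum_neg_distrib]
        exact Finset.sum_congr rfl (fun r _ => by rw [h2 r]; ring)]
      ring
    constructor
    · rw [hsum]
      rcases Nat.eq_zero_or_pos a with h | h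
      · subst h; simp; exact h0 0 (by omega)
      · obtain ⟨b, rfl⟩ : ∃ b, a = b + 1 := ⟨a - 1, by omega⟩
        have := ih1 b rfl
        have hv : v b ≤ v (b+1) := hm b (by omega)
        linarith
    · intro b hb
      have : a = b := by omega
      subst this
      rw [hsum]
      linarith

lemma Qf_cont (m a : ℕ) : Continuous (Qf m a) := by
  unfold Qf
  exact continuous_finset_prod _ (fun k _ => continuous_const.sub (continuous_pow 2))

lemma Uf_cont (m : ℕ) : Continuous (Uf m) := by
  unfold Uf
  exact continuous_finset_prod _ (fun k _ => continuous_const.sub (continuous_pow 2))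

lemma I_eq_s7 (m a : ℕ) :
    I m a = ∫ t in (0:ℝ)..1, ∑ r ∈ Finset.range a, Qf m a (t + (r:ℝ)) := by
  have hcont := Qf_cont m a
  have hswap := intervalIntegral.integral_finset_sum (μ := MeasureTheory.volume)
    (a := (0:ℝ)) (b := 1) (s := Finset.range a)
    (f := fun (r:ℕ) (t:ℝ) => Qf m a (t + (r:ℝ)))
    (fun i _ => (hcont.comp (continuous_id.add continuous_const)).intervalIntegrable 0 1)
  rw [hswap]
  have h2 : ∀ r : ℕ, (∫ t in (0:ℝ)..1, Qf m a (t + (r:ℝ)))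
      = ∫ x in ((r:ℝ))..((r:ℝ)+1), Qf m a x := by
    intro r
    rw [intervalIntegral.integral_comp_add_right (fun x => Qf m a x) (r:ℝ)]
    norm_num [add_comm]
  simp only [h2]
  have h3 : ∑ r ∈ Finset.range a, (∫ x in ((r:ℝ))..((r:ℝ)+1), Qf m a x)
      = ∫ x in ((0:ℕ):ℝ)..((a:ℕ):ℝ), Qf m a x := by
    have := intervalIntegral.sum_integral_adjacent_intervals
      (a := fun k : ℕ => (k:ℝ)) (f := Qf m a) (μ := MeasureTheory.volume) (n := a)
      (fun k _ => hcont.intervalIntegrable _ _)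
    rw [← this]
    exact Finset.sum_congr rfl (fun r _ => by push_cast; ring_nf)
  rw [h3]
  rw [I]
  norm_num [Qf]

lemma Qf_mono {m a r : ℕ} (hr : r + 1 < a) (ham : a ≤ m) {t : ℝ} (ht0 : 0 ≤ t) (ht1 : t ≤ 1) :
    (-1:ℝ)^(r+1) * Qf m a (t + (r:ℝ)) ≤ (-1:ℝ)^(r+1+1) * Qf m a (t + ((r:ℝ)+1)) := by
  set x : ℝ := t + r with hx
  have hxr : (r:ℝ) ≤ x := by rw [hx]; linarith
  have hx1 : x ≤ (r:ℝ) + 1 := by rw [hx]; linarith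
  have hx0 : 0 ≤ x := le_trans (Nat.cast_nonneg r) hxr
  have hra : ((r:ℝ) + 2) ≤ (a:ℝ) := by exact_mod_cast Nat.cast_le.mpr hr
  have ham' : (a:ℝ) ≤ (m:ℝ) := Nat.cast_le.mpr ham
  have hid := Qf_id (show a < m+1 by omega) x
  have hv : 0 ≤ (-1:ℝ)^(r+1) * Qf m a (t + (r:ℝ)) := Qf_sign (by omega) ham ht0 ht1
  have hv' : 0 ≤ (-1:ℝ)^(r+1+1) * Qf m a (t + ((r:ℝ)+1)) := by
    have h := Qf_sign (m := m) (a := a) (r := r+1) (by omega) ham ht0 ht1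
    have : t + ((r+1:ℕ):ℝ) = t + ((r:ℝ)+1) := by push_cast; ring
    rwa [this] at h
  have hxx : t + ((r:ℝ)+1) = x + 1 := by rw [hx]; ring
  set D : ℝ := (x * ((a:ℝ) + 1 + x)) * (((a:ℝ) - 1 - x) * ((m:ℝ) - x)) with hD
  set N : ℝ := ((1+x) * ((a:ℝ) - x)) * (((m:ℝ) + 1 + x) * ((a:ℝ) + x)) with hN
  have key : ((-1:ℝ)^(r+1+1) * Qf m a (t + ((r:ℝ)+1))) * D
      = ((-1:ℝ)^(r+1) * Qf m a (t + (r:ℝ))) * N := by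
    rw [hxx, ← hx, hD, hN]
    have hpow : (-1:ℝ)^(r+1+1) = -((-1:ℝ)^(r+1)) := by rw [pow_succ]; ring
    rw [hpow]
    linear_combination (-((-1:ℝ)^(r+1))) * hid
  have f1 : (0:ℝ) ≤ x * ((m:ℝ) - x) := mul_nonneg hx0 (by linarith)
  have f2 : (0:ℝ) ≤ ((a:ℝ) + 1 + x) * (((a:ℝ) - 1 - x)) := mul_nonneg (by linarith) (by linarith)
  have g1 : x * ((m:ℝ) - x) ≤ (1+x) * ((m:ℝ) + 1 + x) := by nlinarith [sq_nonneg x, hx0]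
  have g2 : ((a:ℝ) + 1 + x) * ((a:ℝ) - 1 - x) ≤ ((a:ℝ) - x) * ((a:ℝ) + x) := by nlinarith [hx0]
  have hmul := mul_le_mul g1 g2 f2
    (mul_nonneg (by linarith : (0:ℝ) ≤ 1+x) (by linarith : (0:ℝ) ≤ (m:ℝ)+1+x))
  have hDeq : D = (x * ((m:ℝ) - x)) * (((a:ℝ)+1+x) * ((a:ℝ)-1-x)) := by rw [hD]; ring
  have hNeq : N = ((1+x) * ((m:ℝ)+1+x)) * (((a:ℝ)-x) * ((a:ℝ)+x)) := by rw [hN]; ring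
  have hDN : D ≤ N := by rw [hDeq, hNeq]; exact hmul
  have hDnn : 0 ≤ D := by rw [hDeq]; exact mul_nonneg f1 f2
  have hr0 : (0:ℝ) ≤ (r:ℝ) := Nat.cast_nonneg r
  have hNpos : 0 < N := by
    rw [hN]
    exact mul_pos (mul_pos (by linarith) (by linarith)) (mul_pos (by linarith) (by linarith))
  have : ((-1:ℝ)^(r+1) * Qf m a (t + (r:ℝ))) * N ≤ ((-1:ℝ)^(r+1+1) * Qf m a (t + ((r:ℝ)+1))) * N := by
    rw [← key]
    exact mul_le_mul_of_nonneg_left hDN hv'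
  exact le_of_mul_le_mul_right this hNpos

lemma Uf_mono {m a r : ℕ} (hr : r + 1 < a) (ham : a ≤ m) {t : ℝ} (ht0 : 0 ≤ t) (ht1 : t ≤ 1) :
    (-1:ℝ)^(r+1) * Uf m (t + (r:ℝ)) ≤ (-1:ℝ)^(r+1+1) * Uf m (t + ((r:ℝ)+1)) := by
  set x : ℝ := t + r with hx
  have hxr : (r:ℝ) ≤ x := by rw [hx]; linarith
  have hx1 : x ≤ (r:ℝ) + 1 := by rw [hx]; linarith
  have hx0 : 0 ≤ x := le_trans (Nat.cast_nonneg r) hxr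
  have hra : ((r:ℝ) + 2) ≤ (a:ℝ) := by exact_mod_cast Nat.cast_le.mpr hr
  have ham' : (a:ℝ) ≤ (m:ℝ) := Nat.cast_le.mpr ham
  have hr0 : (0:ℝ) ≤ (r:ℝ) := Nat.cast_nonneg r
  have hid := Uf_id m x
  have hv : 0 ≤ (-1:ℝ)^(r+1) * Uf m (t + (r:ℝ)) := Uf_sign (by omega) ht0 ht1
  have hv' : 0 ≤ (-1:ℝ)^(r+1+1) * Uf m (t + ((r:ℝ)+1)) := by
    have h := Uf_sign (m := m) (r := r+1) (by omega) ht0 ht1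
    have : t + ((r+1:ℕ):ℝ) = t + ((r:ℝ)+1) := by push_cast; ring
    rwa [this] at h
  have hxx : t + ((r:ℝ)+1) = x + 1 := by rw [hx]; ring
  set D : ℝ := x * ((m:ℝ) - x) with hD
  set N : ℝ := (1+x) * ((m:ℝ) + 1 + x) with hN
  have key : ((-1:ℝ)^(r+1+1) * Uf m (t + ((r:ℝ)+1))) * D
      = ((-1:ℝ)^(r+1) * Uf m (t + (r:ℝ))) * N := by
    rw [hxx, ← hx, hD, hN]
    have hpow : (-1:ℝ)^(r+1+1) = -((-1:ℝ)^(r+1)) := by rw [pow_succ]; ring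
    rw [hpow]
    linear_combination (-((-1:ℝ)^(r+1))) * hid
  have hDnn : 0 ≤ D := by rw [hD]; exact mul_nonneg hx0 (by linarith)
  have hDN : D ≤ N := by rw [hD, hN]; nlinarith [sq_nonneg x, hx0]
  have hNpos : 0 < N := by rw [hN]; exact mul_pos (by linarith) (by linarith)
  have h2 : ((-1:ℝ)^(r+1) * Uf m (t + (r:ℝ))) * N ≤ ((-1:ℝ)^(r+1+1) * Uf m (t + ((r:ℝ)+1))) * N := by
    rw [← key]
    exact mul_le_mul_of_nonneg_left hDN hv'
  exact le_of_mul_le_mul_right h2 hNpos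

lemma pow_parity (a r : ℕ) : (-1:ℝ)^(a+r+1) * (-1:ℝ)^(r+1) = (-1:ℝ)^a := by
  rw [← pow_add, show a+r+1+(r+1) = a + 2*(r+1) by ring, pow_add, pow_mul]
  norm_num

lemma Qf_sum_nonneg {m a : ℕ} (ham : a ≤ m) {t : ℝ} (ht0 : 0 ≤ t) (ht1 : t ≤ 1) :
    0 ≤ (-1:ℝ)^a * ∑ r ∈ Finset.range a, Qf m a (t + (r:ℝ)) := by
  have hrw : (-1:ℝ)^a * ∑ r ∈ Finset.range a, Qf m a (t + (r:ℝ))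
      = ∑ r ∈ Finset.range a, (-1:ℝ)^(a+r+1) * ((-1:ℝ)^(r+1) * Qf m a (t + (r:ℝ))) := by
    rw [Finset.mul_sum]
    refine Finset.sum_congr rfl (fun r _ => ?_)
    rw [← mul_assoc, pow_parity]
  rw [hrw]
  refine (alt_sum (fun r => (-1:ℝ)^(r+1) * Qf m a (t + (r:ℝ))) a
    (fun r hr => Qf_sign hr ham ht0 ht1) (fun r hr => ?_)).1
  have := Qf_mono hr ham ht0 ht1
  have hc : t + ((r+1:ℕ):ℝ) = t + ((r:ℝ)+1) := by push_cast; ring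
  simpa only [hc] using this

lemma Uf_sum_nonneg {m a : ℕ} (ham : a ≤ m) {t : ℝ} (ht0 : 0 ≤ t) (ht1 : t ≤ 1) :
    0 ≤ (-1:ℝ)^a * ∑ r ∈ Finset.range a, Uf m (t + (r:ℝ)) := by
  have hrw : (-1:ℝ)^a * ∑ r ∈ Finset.range a, Uf m (t + (r:ℝ))
      = ∑ r ∈ Finset.range a, (-1:ℝ)^(a+r+1) * ((-1:ℝ)^(r+1) * Uf m (t + (r:ℝ))) := by
    rw [Finset.mul_sum]
    refine Finset.sum_congr rfl (fun r _ => ?_)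
    rw [← mul_assoc, pow_parity]
  rw [hrw]
  refine (alt_sum (fun r => (-1:ℝ)^(r+1) * Uf m (t + (r:ℝ))) a
    (fun r hr => Uf_sign (by omega) ht0 ht1) (fun r hr => ?_)).1
  have := Uf_mono hr ham ht0 ht1
  have hc : t + ((r+1:ℕ):ℝ) = t + ((r:ℝ)+1) := by push_cast; ring
  simpa only [hc] using this

lemma I_sign_s7 {m a : ℕ} (ham : a ≤ m) : 0 ≤ (-1:ℝ)^a * I m a := by
  rw [I_eq_s7, ← intervalIntegral.integral_const_mul]
  apply intervalIntegral.integral_nonneg (by norm_num)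
  intro u hu
  exact Qf_sum_nonneg ham hu.1 hu.2

lemma Qf_succ {m a : ℕ} (ham : a ≤ m) (x : ℝ) :
    Qf (m+1) a x = (((m:ℝ)+1)^2 - x^2) * Qf m a x := by
  have hset : (Finset.range (m+2)).erase a
      = insert (m+1) ((Finset.range (m+1)).erase a) := by
    ext k
    simp only [Finset.mem_erase, Finset.mem_insert, Finset.mem_range]
    omega
  have hnotmem : (m+1) ∉ (Finset.range (m+1)).erase a := by
    simp only [Finset.mem_erase, Finset.mem_range]
    omega
  rw [Qf, show m+1+1 = m+2 from rfl, hset, Finset.prod_insert hnotmem, Qf]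
  congr 1
  push_cast
  ring

lemma Qf_Uf {m a : ℕ} (ham : a ≤ m) (x : ℝ) :
    Qf m a x * ((a:ℝ)^2 - x^2) = Uf m x := by
  rw [Qf, Uf]
  exact Finset.prod_erase_mul _ _ (Finset.mem_range.mpr (by omega))

lemma I_step {m a : ℕ} (ham : a ≤ m) :
    (((m:ℝ)+1)^2 - (a:ℝ)^2) * ((-1:ℝ)^a * I m a) ≤ (-1:ℝ)^a * I (m+1) a := by
  set c : ℝ := ((m:ℝ)+1)^2 - (a:ℝ)^2 with hc
  have hQcont : Continuous fun t : ℝ => ∑ r ∈ Finset.range a, Qf m a (t + (r:ℝ)) :=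
    continuous_finset_sum _ (fun r _ =>
      (Qf_cont m a).comp (continuous_id.add continuous_const))
  have hQcont' : Continuous fun t : ℝ => ∑ r ∈ Finset.range a, Qf (m+1) a (t + (r:ℝ)) :=
    continuous_finset_sum _ (fun r _ =>
      (Qf_cont (m+1) a).comp (continuous_id.add continuous_const))
  have hdiff : (-1:ℝ)^a * I (m+1) a - c * ((-1:ℝ)^a * I m a)
      = ∫ t in (0:ℝ)..1, ((-1:ℝ)^a * ∑ r ∈ Finset.range a, Uf m (t + (r:ℝ))) := by
    rw [I_eq_s7 (m+1) a, I_eq_s7 m a, ← intervalIntegral.integral_const_mul,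
      ← intervalIntegral.integral_const_mul, ← intervalIntegral.integral_const_mul,
      ← intervalIntegral.integral_sub
        (show IntervalIntegrable
          (fun t : ℝ => (-1:ℝ)^a * ∑ r ∈ Finset.range a, Qf (m+1) a (t + (r:ℝ))) MeasureTheory.volume 0 1 from
          (continuous_const.mul hQcont').intervalIntegrable 0 1)
        (show IntervalIntegrable
          (fun t : ℝ => c * ((-1:ℝ)^a * ∑ r ∈ Finset.range a, Qf m a (t + (r:ℝ)))) MeasureTheory.volume 0 1 from
          (continuous_const.mul (continuous_const.mul hQcont)).intervalIntegrable 0 1)]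
    congr 1
    funext t
    rw [Finset.mul_sum, Finset.mul_sum, Finset.mul_sum, Finset.mul_sum, ← Finset.sum_sub_distrib]
    refine Finset.sum_congr rfl (fun r _ => ?_)
    have h1 := Qf_succ ham (t + (r:ℝ))
    have h2 := Qf_Uf ham (t + (r:ℝ))
    rw [hc]
    linear_combination ((-1:ℝ)^a) * h1 + ((-1:ℝ)^a) * h2
  have hnn : 0 ≤ (-1:ℝ)^a * I (m+1) a - c * ((-1:ℝ)^a * I m a) := by
    rw [hdiff]
    apply intervalIntegral.integral_nonneg (by norm_num)
    intro u hu
    exact Uf_sum_nonneg ham hu.1 hu.2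
  linarith


lemma fact_shift {p : ℕ} (hp : 1 ≤ p) : p.factorial = p * (p-1).factorial := by
  have h := Nat.factorial_succ (p-1)
  rw [show p-1+1 = p by omega] at h
  exact h

lemma choose_id {m a : ℕ} (ha1 : 1 ≤ a) (ham : a ≤ m) :
    ((m+1-a)*(m+1+a)) * Nat.choose (2*(m+1)) (m+1-a)
      = (2*(m+1))*(2*(m+1)-1) * Nat.choose (2*m) (m-a) := by
  have key1 : (((m+1-a)*(m+1+a)) * Nat.choose (2*(m+1)) (m+1-a)) *
      ((m-a).factorial * (m+a).factorial) = (2*(m+1)).factorial := by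
    have e1 : (m+1-a) * (m-a).factorial = (m+1-a).factorial := by
      have := fact_shift (p := m+1-a) (by omega)
      rw [show m+1-a-1 = m-a by omega] at this
      exact this.symm
    have e2 : (m+1+a) * (m+a).factorial = (m+1+a).factorial := by
      have := fact_shift (p := m+1+a) (by omega)
      rw [show m+1+a-1 = m+a by omega] at this
      exact this.symm
    have e3 := Nat.choose_mul_factorial_mul_factorial (show m+1-a ≤ 2*(m+1) by omega)
    rw [show 2*(m+1) - (m+1-a) = m+1+a by omega] at e3
    calc (((m+1-a)*(m+1+a)) * Nat.choose (2*(m+1)) (m+1-a)) *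
        ((m-a).factorial * (m+a).factorial)
        = Nat.choose (2*(m+1)) (m+1-a) * ((m+1-a) * (m-a).factorial) *
          ((m+1+a) * (m+a).factorial) := by ring
      _ = Nat.choose (2*(m+1)) (m+1-a) * (m+1-a).factorial * (m+1+a).factorial := by
          rw [e1, e2]
      _ = (2*(m+1)).factorial := e3
  have key2 : (((2*(m+1))*(2*(m+1)-1)) * Nat.choose (2*m) (m-a)) *
      ((m-a).factorial * (m+a).factorial) = (2*(m+1)).factorial := by
    have e3 := Nat.choose_mul_factorial_mul_factorial (show m-a ≤ 2*m by omega)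
    rw [show 2*m - (m-a) = m+a by omega] at e3
    have f0 : (2*(m+1)).factorial = (2*(m+1)) * (2*(m+1)-1).factorial := fact_shift (by omega)
    have f1 : (2*(m+1)-1).factorial = (2*(m+1)-1) * (2*m).factorial := by
      have := fact_shift (p := 2*(m+1)-1) (by omega)
      rw [show 2*(m+1)-1-1 = 2*m by omega] at this
      exact this
    calc (((2*(m+1))*(2*(m+1)-1)) * Nat.choose (2*m) (m-a)) *
        ((m-a).factorial * (m+a).factorial)
        = (2*(m+1))*((2*(m+1)-1) * (Nat.choose (2*m) (m-a) * (m-a).factorial * (m+a).factorial)) := by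
          ring
      _ = (2*(m+1))*((2*(m+1)-1) * (2*m).factorial) := by rw [e3]
      _ = (2*(m+1)).factorial := by rw [f0, f1]
  have hpos : 0 < (m-a).factorial * (m+a).factorial :=
    Nat.mul_pos (Nat.factorial_pos _) (Nat.factorial_pos _)
  exact Nat.eq_of_mul_eq_mul_right hpos (key1.trans key2.symm)

lemma abs_eq_sign_mul {a : ℕ} (y : ℝ) : |y| = |(-1:ℝ)^a * y| := by
  rw [abs_mul, abs_pow, abs_neg, abs_one, one_pow, one_mul]

lemma term_ineq {m j : ℕ} (hj : j < m) :
    (((m:ℝ)+1)*(2*((m:ℝ)+1)-1)) * (((2*m).choose j : ℝ) * |I m (m-j)|)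
      ≤ ((2*(m+1)).choose (j+1) : ℝ) * |I (m+1) ((m+1)-(j+1))| := by
  set a : ℕ := m - j with ha
  have ha1 : 1 ≤ a := by omega
  have ham : a ≤ m := by omega
  have e1 : (m+1)-(j+1) = a := by omega
  have e2 : m+1-a = j+1 := by omega
  have e3 : m-a = j := by omega
  rw [e1]
  have habs1 : |I m a| = (-1:ℝ)^a * I m a := by
    rw [abs_eq_sign_mul (a := a)]
    exact abs_of_nonneg (I_sign_s7 ham)
  have habs2 : |I (m+1) a| = (-1:ℝ)^a * I (m+1) a := by
    rw [abs_eq_sign_mul (a := a)]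
    exact abs_of_nonneg (I_sign_s7 (by omega))
  have hstep := I_step ham
  have hch : ((2*(m+1)).choose (j+1) : ℝ) * (((m:ℝ)+1)^2 - (a:ℝ)^2)
      = 2*((m:ℝ)+1)*(2*((m:ℝ)+1)-1) * ((2*m).choose j : ℝ) := by
    have h := choose_id ha1 ham
    rw [e2, e3] at h
    have h' := congrArg (fun k : ℕ => (k:ℝ)) h
    push_cast [Nat.cast_sub (show a ≤ m+1 by omega),
      Nat.cast_sub (show 1 ≤ 2*(m+1) by omega)] at h'
    have hcast : (a:ℝ) + (j:ℝ) = (m:ℝ) := by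
      have : a + j = m := by omega
      exact_mod_cast congrArg (fun k : ℕ => (k:ℝ)) this
    linear_combination h' - ((((2*(m+1)).choose (j+1) : ℕ):ℝ) * ((m:ℝ)+1+(a:ℝ))) * hcast
  have h1 : 0 ≤ (-1:ℝ)^a * I m a := I_sign_s7 ham
  have hm0 : (0:ℝ) ≤ (m:ℝ) := Nat.cast_nonneg m
  have hc2 : (0:ℝ) ≤ ((2*m).choose j : ℝ) := Nat.cast_nonneg _
  have hcoef : ((m:ℝ)+1)*(2*((m:ℝ)+1)-1) * ((2*m).choose j : ℝ)
      ≤ ((2*(m+1)).choose (j+1) : ℝ) * (((m:ℝ)+1)^2 - (a:ℝ)^2) := by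
    rw [hch]
    have hX : 0 ≤ ((m:ℝ)+1)*(2*((m:ℝ)+1)-1)*(((2*m).choose j : ℕ):ℝ) :=
      mul_nonneg (mul_nonneg (by linarith) (by linarith)) hc2
    linarith
  calc (((m:ℝ)+1)*(2*((m:ℝ)+1)-1)) * (((2*m).choose j : ℝ) * |I m a|)
      = (((m:ℝ)+1)*(2*((m:ℝ)+1)-1) * ((2*m).choose j : ℝ)) * ((-1:ℝ)^a * I m a) := by
        rw [habs1]; ring
    _ ≤ (((2*(m+1)).choose (j+1) : ℝ) * (((m:ℝ)+1)^2 - (a:ℝ)^2)) * ((-1:ℝ)^a * I m a) :=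
        mul_le_mul_of_nonneg_right hcoef h1
    _ = ((2*(m+1)).choose (j+1) : ℝ) * ((((m:ℝ)+1)^2 - (a:ℝ)^2) * ((-1:ℝ)^a * I m a)) := by
        ring
    _ ≤ ((2*(m+1)).choose (j+1) : ℝ) * ((-1:ℝ)^a * I (m+1) a) :=
        mul_le_mul_of_nonneg_left hstep (Nat.cast_nonneg _)
    _ = ((2*(m+1)).choose (j+1) : ℝ) * |I (m+1) a| := by rw [habs2]


lemma C_pos (n : ℕ) : 0 < C n := by
  rw [C]
  have h4 : (0:ℝ) < 4*π := by positivity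
  exact div_pos (Real.rpow_pos_of_pos h4 _) (Real.Gamma_pos_of_pos (by positivity))

lemma C_rec (n : ℕ) (hn : 1 ≤ n) : C (n-1) = 2*π*(2*(n:ℝ)-1) * C n := by
  obtain ⟨m, rfl⟩ : ∃ m, n = m+1 := ⟨n-1, by omega⟩
  simp only [Nat.add_sub_cancel]
  rw [C, C]
  have hπ := Real.pi_pos
  have h4 : (0:ℝ) < 4*π := by positivity
  have hg : Real.Gamma (((m+1:ℕ):ℝ) + 1/2) = ((m:ℝ)+1/2) * Real.Gamma ((m:ℝ)+1/2) := by
    have h := Real.Gamma_add_one (s := (m:ℝ)+1/2) (by positivity)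
    rw [show (((m+1:ℕ):ℝ) + 1/2) = ((m:ℝ)+1/2)+1 by push_cast; ring, h]
  have hr : (4*π) ^ (-(((m+1:ℕ):ℝ) + 1/2))
      = (4*π) ^ (-((m:ℝ) + 1/2)) * ((4*π) ^ (-1:ℝ)) := by
    rw [← Real.rpow_add h4]
    congr 1
    push_cast
    ring
  rw [hg, hr, Real.rpow_neg_one]
  have hgpos : 0 < Real.Gamma ((m:ℝ)+1/2) := Real.Gamma_pos_of_pos (by positivity)
  have hm12 : ((m:ℝ)+1/2) ≠ 0 := by positivity
  field_simp
  push_cast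
  ring

theorem alpha_growth (n : ℕ) (hn : 2 ≤ n) :
    α n ≥ ((n : ℝ) / (2*π)) * α (n-1) := by
  have hπ := Real.pi_pos
  have hCn := C_pos n
  have hrec := C_rec n (by omega)
  obtain ⟨m, rfl⟩ : ∃ m, n = m+1 := ⟨n-1, by omega⟩
  have hm1 : 1 ≤ m := by omega
  simp only [Nat.add_sub_cancel] at hrec ⊢
  have hsum : (((m:ℝ)+1)*(2*((m:ℝ)+1)-1)) *
      ∑ j ∈ Finset.range m, ((2*m).choose j : ℝ) * |I m (m-j)|
      ≤ ∑ j ∈ Finset.range (m+1), ((2*(m+1)).choose j : ℝ) * |I (m+1) ((m+1)-j)| := by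
    rw [Finset.sum_range_succ', Finset.mul_sum]
    have h0 : 0 ≤ ((2*(m+1)).choose 0 : ℝ) * |I (m+1) ((m+1) - 0)| := by positivity
    refine le_trans (Finset.sum_le_sum (fun j hj => ?_)) (le_add_of_nonneg_right h0)
    exact term_ineq (Finset.mem_range.mp hj)
  rw [ge_iff_le, α, α]
  set Sm : ℝ := ∑ j ∈ Finset.range m, ((2*m).choose j : ℝ) * |I m (m-j)| with hSm
  set Sn : ℝ := ∑ j ∈ Finset.range (m+1), ((2*(m+1)).choose j : ℝ) * |I (m+1) ((m+1)-j)| with hSn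
  have hSmnn : 0 ≤ Sm := by
    rw [hSm]
    exact Finset.sum_nonneg (fun j _ => by positivity)
  have heq : (((m+1:ℕ):ℝ) / (2*π)) * (4*π * C m * Sm)
      = (4*π * C (m+1)) * ((((m:ℝ)+1)*(2*((m:ℝ)+1)-1)) * Sm) := by
    rw [hrec]
    push_cast
    field_simp
  rw [heq]
  apply mul_le_mul_of_nonneg_left _ (by positivity : (0:ℝ) ≤ 4*π * C (m+1))
  exact le_trans hsum (le_of_eq rfl)
end

section
/- For every integer n ≥ 1, α(n) ≥ (2/3) · n! / (2π)^n. -/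
open Real

lemma prodP (n : ℕ) (hn : 1 ≤ n) :
    ∏ k ∈ Finset.Ico 2 (n+1), ((k:ℝ)^2 - 1)
      = ((n-1).factorial : ℝ) * ((n+1).factorial : ℝ) / 2 := by
  induction n, hn using Nat.le_induction with
  | base => simp
  | succ m hm ih =>
    rw [Finset.prod_Ico_succ_top (by omega), ih]
    have h2 : m - 1 + 1 = m := by omega
    have hfm : (m.factorial : ℝ) = m * (m-1).factorial := by
      conv_lhs => rw [← h2, Nat.factorial_succ, h2]
      push_cast; ring
    rw [show m + 1 - 1 = m from rfl, show m+1+1 = (m+1)+1 from rfl,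
      Nat.factorial_succ (m+1)]
    push_cast [hfm]
    ring

lemma gammaF (m : ℕ) :
    Real.Gamma (((m+1:ℕ):ℝ) + 1/2) = √π * (2*(m+1)).factorial / (4^(m+1) * (m+1).factorial) := by
  have h := Real.Gamma_mul_Gamma_add_half ((m+1:ℕ):ℝ)
  set G := Real.Gamma (((m+1:ℕ):ℝ) + 1/2) with hGdef
  have hg1 : Real.Gamma ((m+1:ℕ):ℝ) = m.factorial := by
    rw [show ((m+1:ℕ):ℝ) = (m:ℝ)+1 by push_cast; ring, Real.Gamma_nat_eq_factorial]
  have hg2 : Real.Gamma (2*((m+1:ℕ):ℝ)) = (2*m+1).factorial := by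
    rw [show 2*((m+1:ℕ):ℝ) = ((2*m+1:ℕ):ℝ)+1 by push_cast; ring, Real.Gamma_nat_eq_factorial]
  have hrp : (2:ℝ) ^ ((1:ℝ) - 2*((m+1:ℕ):ℝ)) = 2 / 4^(m+1) := by
    rw [show (1:ℝ) - 2*((m+1:ℕ):ℝ) = -(((2*m+1:ℕ):ℝ)) by push_cast; ring,
      Real.rpow_neg (by norm_num), Real.rpow_natCast]
    rw [show (4:ℝ)^(m+1) = 2^(2*(m+1)) by rw [show (4:ℝ) = 2^2 by norm_num, ← pow_mul],
      show 2*(m+1) = (2*m+1)+1 by ring, pow_succ]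
    field_simp
    ring
  rw [hg1, hg2, hrp] at h
  field_simp at h
  rw [show (2*(m+1)).factorial = (2*(m+1)) * (2*m+1).factorial from Nat.factorial_succ (2*m+1) ▸ (by rw [show 2*(m+1) = (2*m+1)+1 by ring]),
    Nat.factorial_succ m]
  rw [eq_div_iff (by positivity)]
  push_cast
  linear_combination ((m:ℝ)+1) * h

lemma fourPiC (m : ℕ) :
    4*π * C (m+1) = 2 * ((m+1).factorial:ℝ) / (π^(m+1) * ((2*(m+1)).factorial:ℝ)) := by
  have h4π : (4*π:ℝ) ^ (-(((m+1:ℕ):ℝ)+1/2)) = ((4*π)^(m+1) * (2*√π))⁻¹ := by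
    rw [Real.rpow_neg (by positivity), Real.rpow_add (by positivity), Real.rpow_natCast,
      ← Real.sqrt_eq_rpow, show (4*π:ℝ) = 2^2 * π by norm_num, Real.sqrt_mul (by positivity),
      Real.sqrt_sq (by norm_num)]
  have hs2 : √π * √π = π := Real.mul_self_sqrt pi_pos.le
  have hs0 : (0:ℝ) < √π := Real.sqrt_pos.mpr pi_pos
  rw [C, show ((m+1:ℕ):ℝ) = ((m:ℝ)+1) from by push_cast; ring] at *
  rw [show ((m:ℝ)+1+1/2) = (((m+1:ℕ):ℝ)+1/2) from by push_cast; ring, gammaF m]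
  rw [show ((m:ℝ)+1+1/2) = (((m+1:ℕ):ℝ)+1/2) from by push_cast; ring] at h4π
  rw [h4π, mul_pow]
  have h1 : (0:ℝ) < (2*(m+1)).factorial := by positivity
  have h2 : (0:ℝ) < (m+1).factorial := by positivity
  field_simp
  have hs2' : √π ^ 2 = π := Real.sq_sqrt pi_pos.le
  ring_nf
  rw [hs2']

lemma I_one (n : ℕ) (hn : 1 ≤ n) :
    (∏ k ∈ Finset.Ico 2 (n+1), ((k:ℝ)^2 - 1)) / 3 ≤ |I n 1| := by
  set P := ∏ k ∈ Finset.Ico 2 (n+1), ((k:ℝ)^2 - 1) with hPdef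
  have hPnn : 0 ≤ P := Finset.prod_nonneg fun i hi => by
    have : 2 ≤ i := (Finset.mem_Ico.mp hi).1
    have : (2:ℝ) ≤ i := by exact_mod_cast this
    nlinarith
  have hE : (Finset.range (n+1)).erase 1 = insert 0 (Finset.Ico 2 (n+1)) := by
    ext k
    simp only [Finset.mem_erase, Finset.mem_range, Finset.mem_insert, Finset.mem_Ico]
    omega
  have hI : I n 1 = - ∫ x in (0:ℝ)..1, x^2 * ∏ k ∈ Finset.Ico 2 (n+1), ((k:ℝ)^2 - x^2) := by
    rw [I, hE, Nat.cast_one, ← intervalIntegral.integral_neg]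
    congr 1
    ext x
    rw [Finset.prod_insert (by simp)]
    push_cast
    ring
  have hcont : Continuous fun x : ℝ => x^2 * ∏ k ∈ Finset.Ico 2 (n+1), ((k:ℝ)^2 - x^2) := by
    apply (continuous_pow 2).mul
    exact continuous_finset_prod _ fun i _ => by continuity
  have hmono : ∫ x in (0:ℝ)..1, P * x^2 ≤
      ∫ x in (0:ℝ)..1, x^2 * ∏ k ∈ Finset.Ico 2 (n+1), ((k:ℝ)^2 - x^2) := by
    apply intervalIntegral.integral_mono_on (by norm_num)
      ((continuous_const.mul (continuous_pow 2)).intervalIntegrable 0 1)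
      (hcont.intervalIntegrable 0 1)
    intro x hx
    obtain ⟨hx0, hx1⟩ := hx
    have hx2 : x^2 ≤ 1 := by nlinarith
    have hPle : P ≤ ∏ k ∈ Finset.Ico 2 (n+1), ((k:ℝ)^2 - x^2) := by
      apply Finset.prod_le_prod
      · intro i hi
        have : 2 ≤ i := (Finset.mem_Ico.mp hi).1
        have : (2:ℝ) ≤ i := by exact_mod_cast this
        nlinarith
      · intro i _
        nlinarith
    calc P * x^2 ≤ (∏ k ∈ Finset.Ico 2 (n+1), ((k:ℝ)^2 - x^2)) * x^2 :=
          mul_le_mul_of_nonneg_right hPle (by positivity)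
      _ = x^2 * ∏ k ∈ Finset.Ico 2 (n+1), ((k:ℝ)^2 - x^2) := by ring
  have hval : ∫ x in (0:ℝ)..1, P * x^2 = P / 3 := by
    rw [intervalIntegral.integral_const_mul, integral_pow]
    norm_num
    ring
  rw [hI, abs_neg]
  rw [abs_of_nonneg (le_trans (by rw [hval] at hmono ⊢; positivity) hmono)]
  · linarith [hval ▸ hmono]

theorem alpha_lower_bound (n : ℕ) (hn : 1 ≤ n) :
    α n ≥ (2/3) * (n.factorial : ℝ) / (2*π)^n := by
  obtain ⟨m, rfl⟩ : ∃ m, n = m + 1 := ⟨n-1, by omega⟩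
  clear hn
  set P := ∏ k ∈ Finset.Ico 2 (m+1+1), ((k:ℝ)^2 - 1) with hPdef
  have hP : P = (m.factorial:ℝ) * ((m+2).factorial:ℝ) / 2 := by
    simpa using prodP (m+1) (by omega)
  have hPnn : 0 ≤ P := by rw [hP]; positivity
  have hIone : P / 3 ≤ |I (m+1) 1| := I_one (m+1) (by omega)
  have hterm : ((2*(m+1)).choose m : ℝ) * |I (m+1) (m+1 - m)| ≤
      ∑ j ∈ Finset.range (m+1), ((2*(m+1)).choose j : ℝ) * |I (m+1) (m+1 - j)| :=
    Finset.single_le_sum (f := fun j => ((2*(m+1)).choose j : ℝ) * |I (m+1) (m+1 - j)|)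
      (fun i _ => by positivity) (Finset.self_mem_range_succ m)
  rw [show m+1-m = 1 by omega] at hterm
  have hCpos : 0 < 4*π*C (m+1) := by
    rw [fourPiC m]; positivity
  have hstep : 4*π*C (m+1) * (((2*(m+1)).choose m : ℝ) * (P/3)) ≤ α (m+1) := by
    rw [α]
    apply mul_le_mul_of_nonneg_left _ hCpos.le
    exact le_trans (mul_le_mul_of_nonneg_left hIone (by positivity)) hterm
  have hchR : ((2*(m+1)).choose m : ℝ) * (m.factorial:ℝ) * ((m+2).factorial:ℝ)
      = ((2*(m+1)).factorial:ℝ) := by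
    have := Nat.choose_mul_factorial_mul_factorial (show m ≤ 2*(m+1) by omega)
    rw [show 2*(m+1) - m = m+2 by omega] at this
    exact_mod_cast congrArg (Nat.cast : ℕ → ℝ) this
  have hval : 4*π*C (m+1) * (((2*(m+1)).choose m : ℝ) * (P/3))
      = ((m+1).factorial : ℝ) / (3 * π^(m+1)) := by
    rw [fourPiC m, hP]
    have h2N : (0:ℝ) < (2*(m+1)).factorial := by positivity
    rw [div_mul_eq_mul_div, div_eq_div_iff (by positivity) (by positivity)]
    linear_combination (((m+1).factorial : ℝ) * π^(m+1)) * hchR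
  have hfin : (2/3) * ((m+1).factorial : ℝ) / (2*π)^(m+1)
      ≤ ((m+1).factorial : ℝ) / (3 * π^(m+1)) := by
    rw [mul_pow, div_le_div_iff₀ (by positivity) (by positivity)]
    have h2p : (2:ℝ) ≤ 2^(m+1) := by
      calc (2:ℝ) = 2^1 := by norm_num
        _ ≤ 2^(m+1) := pow_le_pow_right₀ (by norm_num) (by omega)
    have hπp : (0:ℝ) < π^(m+1) := by positivity
    have hF : (0:ℝ) ≤ ((m+1).factorial : ℝ) := by positivity
    nlinarith [mul_nonneg (mul_nonneg hF (sub_nonneg.mpr h2p)) hπp.le]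
  calc α (m+1) ≥ 4*π*C (m+1) * (((2*(m+1)).choose m : ℝ) * (P/3)) := hstep
    _ = ((m+1).factorial : ℝ) / (3 * π^(m+1)) := hval
    _ ≥ (2/3) * ((m+1).factorial : ℝ) / (2*π)^(m+1) := hfin
end

section
/- For all integers n ≥ 1 and 1 ≤ a ≤ n, one has I(n,a) = (−1)^{n+1} · Σ_{r=0}^{a−1} ∫₀^1 f_{n,a,r}(t) dt. -/
open Real

lemma prod_reflect_aux (n : ℕ) (x : ℝ) :
    ∏ j ∈ Finset.range (n+1), (x + (j:ℝ) - n) = ∏ j ∈ Finset.range (n+1), (x - j) := by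
  rw [← Finset.prod_range_reflect (fun j : ℕ => x - (j:ℝ)) (n+1)]
  apply Finset.prod_congr rfl
  intro j hj
  simp only [Finset.mem_range] at hj
  have hj' : j ≤ n := by omega
  have h : ((n + 1 - 1 - j : ℕ) : ℝ) = (n:ℝ) - j := by
    have h0 : n + 1 - 1 - j = n - j := by omega
    rw [h0, Nat.cast_sub hj']
  rw [h]; ring

lemma prodB (n : ℕ) (x : ℝ) :
    ∏ k ∈ Finset.range (n+1), ((k:ℝ)^2 - x^2)
      = (-1:ℝ)^(n+1) * (x * ∏ k ∈ Finset.range (2*n+1), (x + (k:ℝ) - n)) := by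
  have hsplit : ∏ k ∈ Finset.range (2*n+1), (x + (k:ℝ) - n)
      = (∏ k ∈ Finset.range (n+1), (x - k)) * ∏ k ∈ Finset.range n, (x + ((k:ℝ)+1)) := by
    have h2 : 2*n+1 = (n+1) + n := by ring
    rw [h2, Finset.prod_range_add, prod_reflect_aux]
    congr 1
    apply Finset.prod_congr rfl
    intro i _
    push_cast; ring
  have hx : x * ∏ k ∈ Finset.range (2*n+1), (x + (k:ℝ) - n)
      = (∏ k ∈ Finset.range (n+1), (x - k)) * ∏ k ∈ Finset.range (n+1), (x + k) := by
    rw [hsplit, Finset.prod_range_succ' (fun k : ℕ => x + (k:ℝ)) n]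
    push_cast; ring
  rw [hx]
  calc ∏ k ∈ Finset.range (n+1), ((k:ℝ)^2 - x^2)
      = ∏ k ∈ Finset.range (n+1), ((-1:ℝ) * ((x - k) * (x + k))) := by
        apply Finset.prod_congr rfl; intro k _; ring
    _ = (∏ _k ∈ Finset.range (n+1), (-1:ℝ)) *
          ∏ k ∈ Finset.range (n+1), ((x - k) * (x + k)) := Finset.prod_mul_distrib
    _ = (-1:ℝ)^(n+1) *
          ((∏ k ∈ Finset.range (n+1), (x - k)) * ∏ k ∈ Finset.range (n+1), (x + k)) := by
        rw [Finset.prod_const, Finset.card_range, Finset.prod_mul_distrib]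

lemma key (n a r : ℕ) (han : a ≤ n) (hr : r < a) (t : ℝ) (ht : t ∈ Set.Ioo (0:ℝ) 1) :
    ∏ k ∈ (Finset.range (n+1)).erase a, ((k:ℝ)^2 - (t + r)^2)
      = (-1:ℝ)^(n+1) * f n a r t := by
  obtain ⟨ht0, ht1⟩ := ht
  set x : ℝ := t + r with hxdef
  have hx0 : 0 < x := by positivity
  have hxa : x < a := by
    have : (r:ℝ) + 1 ≤ a := by exact_mod_cast hr
    simp only [hxdef]; linarith
  have ha_mem : a ∈ Finset.range (n+1) := Finset.mem_range.mpr (by omega)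
  have hA := Finset.mul_prod_erase (Finset.range (n+1))
    (fun k : ℕ => (k:ℝ)^2 - x^2) ha_mem
  have hB := prodB n x
  have hf : f n a r t = (x / (((a:ℝ)+x)*((a:ℝ)-x)))
      * ∏ k ∈ Finset.range (2*n+1), (x + (k:ℝ) - n) := by
    unfold f
    congr 1
    · congr 1 <;> ring
    · apply Finset.prod_congr rfl; intro k _; simp only [hxdef]; ring
  rw [hf]
  have hmain : ((a:ℝ)^2 - x^2) * ∏ k ∈ (Finset.range (n+1)).erase a, ((k:ℝ)^2 - x^2)
      = (-1:ℝ)^(n+1) * (x * ∏ k ∈ Finset.range (2*n+1), (x + (k:ℝ) - n)) := by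
    rw [← hB]; exact hA
  have h1 : (a:ℝ) + x ≠ 0 := by positivity
  have h2 : (a:ℝ) - x ≠ 0 := by linarith
  field_simp
  linear_combination hmain

theorem I_eq_sum_f (n a : ℕ) (hn : 1 ≤ n) (ha1 : 1 ≤ a) (han : a ≤ n) :
    I n a = (-1 : ℝ)^(n+1) *
      ∑ r ∈ Finset.range a, ∫ t in (0:ℝ)..1, f n a r t := by
  set g : ℝ → ℝ := fun x => ∏ k ∈ (Finset.range (n+1)).erase a, ((k:ℝ)^2 - x^2) with hg
  have hgc : Continuous g := by
    apply continuous_finset_prod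
    intro i _
    continuity
  have heq := intervalIntegral.sum_integral_adjacent_intervals
      (a := fun k : ℕ => (k:ℝ)) (n := a) (f := g) (μ := MeasureTheory.volume)
      (fun k _ => hgc.intervalIntegrable _ _)
  have hstep1 : I n a = ∑ r ∈ Finset.range a, ∫ x in ((r:ℕ):ℝ)..(((r+1:ℕ)):ℝ), g x := by
    rw [I]
    have heq' : (∫ x in (0:ℝ)..(a:ℝ), g x)
        = ∑ r ∈ Finset.range a, ∫ x in ((r:ℕ):ℝ)..(((r+1:ℕ)):ℝ), g x := by
      simpa using heq.symm
    simpa using heq'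
  rw [hstep1, Finset.mul_sum]
  apply Finset.sum_congr rfl
  intro r hr
  have hr' : r < a := Finset.mem_range.mp hr
  have hcomp : (∫ t in (0:ℝ)..1, g (t + r)) = ∫ x in ((r:ℕ):ℝ)..(((r+1:ℕ)):ℝ), g x := by
    rw [intervalIntegral.integral_comp_add_right g (r:ℝ)]
    push_cast
    norm_num [add_comm]
  rw [← hcomp]
  have hcongr : (∫ t in (0:ℝ)..1, g (t + r))
      = ∫ t in (0:ℝ)..1, (-1:ℝ)^(n+1) * f n a r t := by
    apply intervalIntegral.integral_congr_ae
    have h1 : ∀ᵐ x : ℝ, x ≠ 1 := by simp [MeasureTheory.ae_iff]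
    filter_upwards [h1] with t ht hmem
    rw [Set.uIoc_of_le (by norm_num : (0:ℝ) ≤ 1)] at hmem
    have htIoo : t ∈ Set.Ioo (0:ℝ) 1 := ⟨hmem.1, lt_of_le_of_ne hmem.2 ht⟩
    exact key n a r han hr' t htIoo
  rw [hcongr, intervalIntegral.integral_const_mul]
end

section
/- For all integers n ≥ 1, 1 ≤ a ≤ n, and r with 0 ≤ r and r+1 ≤ a−1, and for all t ∈ (0,1), one has |f_{n,a,r+1}(t)| > |f_{n,a,r}(t)|. -/
open Real

theorem abs_f_strict_increasing (n a r : ℕ) (hn : 1 ≤ n) (ha1 : 1 ≤ a)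
    (han : a ≤ n) (hr : r + 1 ≤ a - 1) (t : ℝ) (ht : t ∈ Set.Ioo (0:ℝ) 1) :
    |f n a (r+1) t| > |f n a r t| := by
  obtain ⟨ht0, ht1⟩ := ht
  have hra : r + 2 ≤ a := by omega
  have hAr : ((r:ℝ)) + 2 ≤ a := by exact_mod_cast hra
  have hAN : (a:ℝ) ≤ n := by exact_mod_cast han
  have hr0 : (0:ℝ) ≤ r := Nat.cast_nonneg r
  set g : ℕ → ℝ := fun k => t + ((k:ℝ) - n + r) with hg
  set Q : ℝ := ∏ k ∈ Finset.range (2*n), g (k+1) with hQ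
  have hP1 : (∏ k ∈ Finset.range (2*n+1), (t + ((k:ℝ) - n + r))) = g 0 * Q := by
    rw [Finset.prod_range_succ']
    ring
  have hP2 : (∏ k ∈ Finset.range (2*n+1), (t + ((k:ℝ) - n + ((r+1:ℕ):ℝ)))) = Q * g (2*n+1) := by
    have h : ∀ k ∈ Finset.range (2*n+1), (t + ((k:ℝ) - n + ((r+1:ℕ):ℝ))) = g (k+1) := by
      intro k _; simp only [hg]; push_cast; ring
    rw [Finset.prod_congr rfl h, Finset.prod_range_succ]
  have hQne : Q ≠ 0 := by
    rw [hQ]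
    apply Finset.prod_ne_zero_iff.mpr
    intro k _
    simp only [hg]
    rcases le_or_gt ((n:ℝ)) ((k:ℝ) + 1 + r) with h | h
    · have : (0:ℝ) < t + (((k+1:ℕ):ℝ) - n + r) := by push_cast; linarith
      push_cast at this ⊢; linarith
    · have hk : ((k:ℝ)) + 1 + r ≤ (n:ℝ) - 1 := by
        have : (k:ℤ) + 1 + r ≤ (n:ℤ) - 1 := by
          have := h
          by_contra hc
          push_neg at hc
          have : (n:ℤ) ≤ k + 1 + r := by omega
          have : (n:ℝ) ≤ (k:ℝ) + 1 + r := by exact_mod_cast this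
          linarith
        exact_mod_cast this
      have : t + (((k+1:ℕ):ℝ) - n + r) < 0 := by push_cast; linarith
      push_cast at this ⊢; linarith
  have hQpos : 0 < |Q| := abs_pos.mpr hQne
  -- positivity facts
  have hnr : (r:ℝ) + 2 ≤ (n:ℝ) := le_trans hAr hAN
  have hg0 : g 0 = t - n + r := by simp only [hg]; push_cast; ring
  have hg0neg : g 0 < 0 := by rw [hg0]; linarith
  have hgtop : g (2*n+1) = t + n + 1 + r := by simp [hg]; push_cast; ring
  have hgtoppos : 0 < g (2*n+1) := by rw [hgtop]; linarith
  have hd0pos : 0 < ((a:ℝ) + t + r) * ((a:ℝ) - t - r) := by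
    apply mul_pos <;> linarith
  have hd1pos : 0 < ((a:ℝ) + t + (r+1)) * ((a:ℝ) - t - (r+1)) := by
    apply mul_pos <;> linarith
  have hc0pos : 0 < (t + r) / (((a:ℝ) + t + r) * ((a:ℝ) - t - r)) := by
    apply div_pos <;> linarith [hd0pos]
  have hc1pos : 0 < (t + (r+1)) / (((a:ℝ) + t + (r+1)) * ((a:ℝ) - t - (r+1))) := by
    apply div_pos <;> linarith [hd1pos]
  have habs0 : |f n a r t| =
      ((t + r) / (((a:ℝ) + t + r) * ((a:ℝ) - t - r))) * ((n - r - t) * |Q|) := by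
    rw [f, hP1, abs_mul, abs_mul, abs_of_pos hc0pos, abs_of_neg hg0neg, hg0]
    ring
  have habs1 : |f n a (r+1) t| =
      ((t + (r+1)) / (((a:ℝ) + t + (r+1)) * ((a:ℝ) - t - (r+1)))) * ((t + n + 1 + r) * |Q|) := by
    rw [f]
    push_cast
    rw [show (∏ k ∈ Finset.range (2*n+1), (t + ((k:ℝ) - n + ((r:ℝ)+1)))) =
        (∏ k ∈ Finset.range (2*n+1), (t + ((k:ℝ) - n + ((r+1:ℕ):ℝ)))) by push_cast; rfl,
      hP2, abs_mul, abs_mul]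
    rw [abs_of_pos (by push_cast at hc1pos ⊢; exact hc1pos), abs_of_pos hgtoppos, hgtop]
    ring
  rw [habs0, habs1]
  have key : ((t + r) / (((a:ℝ) + t + r) * ((a:ℝ) - t - r))) * (n - r - t) <
      ((t + (r+1)) / (((a:ℝ) + t + (r+1)) * ((a:ℝ) - t - (r+1)))) * (t + n + 1 + r) := by
    rw [div_mul_eq_mul_div, div_mul_eq_mul_div, div_lt_div_iff₀ hd0pos hd1pos]
    nlinarith [mul_pos (mul_pos (show (0:ℝ) < t + r by linarith) (show (0:ℝ) < n - r - t by linarith)) hd1pos, sq_nonneg (t + r), mul_pos hd0pos hd1pos]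
  calc ((t + r) / (((a:ℝ) + t + r) * ((a:ℝ) - t - r))) * ((n - r - t) * |Q|)
      = (((t + r) / (((a:ℝ) + t + r) * ((a:ℝ) - t - r))) * (n - r - t)) * |Q| := by ring
    _ < (((t + (r+1)) / (((a:ℝ) + t + (r+1)) * ((a:ℝ) - t - (r+1)))) * (t + n + 1 + r)) * |Q| := by
        exact mul_lt_mul_of_pos_right key hQpos
    _ = ((t + (r+1)) / (((a:ℝ) + t + (r+1)) * ((a:ℝ) - t - (r+1)))) * ((t + n + 1 + r) * |Q|) := by ring
end
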